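/- arXiv:1401.4734 — 14 statements merged into one kernel-verified Lean document; each statement's English description precedes it below -/
import Mathlib

section
/- Let G be an α-regular finite simple graph on a nonempty vertex set and let k be an integer with 2 ≤ k ≤ α. Then M_G(k) = k·α − k(k−1)/2 if and only if G contains a clique on k vertices. -/
open SimpleGraph

/-- The number of edges of `G` incident to at least one vertex of `S`. -/
noncomputable def incidentEdgeCount {V : Type*} (G : SimpleGraph V) (S : Finset V) : ℕ :=
  {e ∈ G.edgeSet | ∃ v ∈ S, v ∈ e}.ncard

/-- `fileSize G k` is the minimum, over all `k`-element vertex sets `S`, of the number of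
edges of `G` incident to at least one vertex of `S`. -/
noncomputable def fileSize {V : Type*} (G : SimpleGraph V) (k : ℕ) : ℕ :=
  sInf { m | ∃ S : Finset V, S.card = k ∧ m = incidentEdgeCount G S }

/-!
Double counting incidences between the vertices of `S` and the edges of `G` gives
`∑_{v ∈ S} deg v = #(edges meeting S) + #(edges inside S)`, since an edge meeting `S` has one
or two endpoints in `S` according as it leaves `S` or not. In an `α`-regular graph the left side
is `#S * α`, and at most `(#S).choose 2` edges lie inside `S`, with equality exactly when `S` is
a clique. So every `k`-set meets at least `k * α - k.choose 2` edges, and this bound is attained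
exactly by the `k`-cliques.
-/

namespace SimpleGraph

open Finset

variable {V : Type*}

lemma fileSize_eq_iff (G : SimpleGraph V) {k b : ℕ} (hne : ∃ S : Finset V, #S = k)
    (hb : ∀ S : Finset V, #S = k → b ≤ incidentEdgeCount G S) :
    fileSize G k = b ↔ ∃ S : Finset V, #S = k ∧ incidentEdgeCount G S = b := by
  obtain ⟨S₀, hS₀⟩ := hne
  have hT : {m | ∃ S : Finset V, #S = k ∧ m = incidentEdgeCount G S}.Nonempty :=
    ⟨_, S₀, hS₀, rfl⟩
  constructor
  · rintro rfl
    obtain ⟨S, hS, hm⟩ := Nat.sInf_mem hT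
    exact ⟨S, hS, hm.symm⟩
  · rintro ⟨S, hS, rfl⟩
    refine le_antisymm (Nat.sInf_le ⟨S, hS, rfl⟩) (le_csInf hT ?_)
    rintro _ ⟨S', hS', rfl⟩
    exact hb S' hS'

lemma card_filter_mem_of_not_isDiag [DecidableEq V] (S : Finset V) {e : Sym2 V}
    (he : ¬e.IsDiag) :
    #{v ∈ S | v ∈ e} =
      (if ∃ v ∈ S, v ∈ e then 1 else 0) + (if e ∈ S.sym2 then 1 else 0) := by
  induction e using Sym2.ind with
  | h a b =>
    have hab : a ≠ b := by simpa using he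
    have hfilter : {v ∈ S | v ∈ s(a, b)} = {v ∈ ({a, b} : Finset V) | v ∈ S} := by
      ext v
      simp only [mem_filter, Sym2.mem_iff, mem_insert, mem_singleton]
      tauto
    have hmeet : (∃ v ∈ S, v ∈ s(a, b)) ↔ a ∈ S ∨ b ∈ S := by
      simp [and_or_left, exists_or]
    simp only [hfilter, hmeet, mk_mem_sym2_iff]
    by_cases ha : a ∈ S <;> by_cases hb : b ∈ S <;>
      simp [filter_insert, filter_singleton, ha, hb, hab]

section Incidence

variable [Fintype V] [DecidableEq V] (G : SimpleGraph V) [DecidableRel G.Adj]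

def incidentEdgeFinset (S : Finset V) : Finset (Sym2 V) :=
  {e ∈ G.edgeFinset | ∃ v ∈ S, v ∈ e}

def innerEdgeFinset (S : Finset V) : Finset (Sym2 V) :=
  {e ∈ G.edgeFinset | e ∈ S.sym2}

lemma card_incidentEdgeFinset (S : Finset V) :
    #(incidentEdgeFinset G S) = incidentEdgeCount G S := by
  rw [incidentEdgeCount, ← Set.ncard_coe_finset, incidentEdgeFinset, coe_filter]
  simp only [mem_edgeFinset]

lemma card_incidentEdgeFinset_add_card_innerEdgeFinset (S : Finset V) :
    #(incidentEdgeFinset G S) + #(innerEdgeFinset G S) = ∑ v ∈ S, G.degree v := by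
  calc #(incidentEdgeFinset G S) + #(innerEdgeFinset G S)
      = ∑ e ∈ G.edgeFinset,
          ((if ∃ v ∈ S, v ∈ e then 1 else 0) + (if e ∈ S.sym2 then 1 else 0)) := by
        rw [sum_add_distrib, incidentEdgeFinset, innerEdgeFinset, card_filter, card_filter]
    _ = ∑ e ∈ G.edgeFinset, #{v ∈ S | v ∈ e} :=
        sum_congr rfl fun e he =>
          (card_filter_mem_of_not_isDiag S (G.not_isDiag_of_mem_edgeSet (mem_edgeFinset.1 he))).symm
    _ = ∑ v ∈ S, #{e ∈ G.edgeFinset | v ∈ e} :=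
        (sum_card_bipartiteAbove_eq_sum_card_bipartiteBelow (· ∈ ·)).symm
    _ = ∑ v ∈ S, G.degree v := by
        simp only [← card_incidenceFinset_eq_degree, incidenceFinset_eq_filter]

lemma innerEdgeFinset_subset_image_offDiag (S : Finset V) :
    innerEdgeFinset G S ⊆ S.offDiag.image Sym2.mk.uncurry := by
  rw [← Sym2.filter_image_mk_not_isDiag, ← sym2_eq_image]
  intro e he
  obtain ⟨hedge, hS⟩ := mem_filter.1 he
  exact mem_filter.2 ⟨hS, G.not_isDiag_of_mem_edgeSet (mem_edgeFinset.1 hedge)⟩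

lemma card_innerEdgeFinset_le (S : Finset V) : #(innerEdgeFinset G S) ≤ (#S).choose 2 :=
  Sym2.card_image_offDiag S ▸ card_le_card (innerEdgeFinset_subset_image_offDiag G S)

lemma isClique_iff_card_innerEdgeFinset (S : Finset V) :
    G.IsClique (S : Set V) ↔ #(innerEdgeFinset G S) = (#S).choose 2 := by
  rw [← Sym2.card_image_offDiag]
  constructor
  · intro hS
    congr 1
    refine (innerEdgeFinset_subset_image_offDiag G S).antisymm ?_
    intro e he
    obtain ⟨⟨a, b⟩, hab, rfl⟩ := mem_image.1 he
    obtain ⟨ha, hb, hne⟩ := mem_offDiag.1 hab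
    simp [innerEdgeFinset, hS ha hb hne, ha, hb]
  · intro hcard a ha b hb hne
    have hsets := eq_of_subset_of_card_le (innerEdgeFinset_subset_image_offDiag G S) hcard.ge
    have hmem : s(a, b) ∈ S.offDiag.image Sym2.mk.uncurry :=
      mem_image.2 ⟨(a, b), mem_offDiag.2 ⟨ha, hb, hne⟩, rfl⟩
    rw [← hsets, innerEdgeFinset, mem_filter, mem_edgeFinset] at hmem
    exact hmem.1

variable {G} {α : ℕ}

lemma IsRegularOfDegree.incidentEdgeCount_add_card_innerEdgeFinset
    (hreg : G.IsRegularOfDegree α) (S : Finset V) :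
    incidentEdgeCount G S + #(innerEdgeFinset G S) = #S * α := by
  rw [← card_incidentEdgeFinset, card_incidentEdgeFinset_add_card_innerEdgeFinset,
    sum_congr rfl fun v _ => hreg v, sum_const, smul_eq_mul]

lemma IsRegularOfDegree.sub_choose_two_le_incidentEdgeCount (hreg : G.IsRegularOfDegree α)
    (S : Finset V) : #S * α - (#S).choose 2 ≤ incidentEdgeCount G S := by
  have hsum := hreg.incidentEdgeCount_add_card_innerEdgeFinset S
  have hinner := card_innerEdgeFinset_le G S
  omega

lemma IsRegularOfDegree.incidentEdgeCount_eq_iff_isClique (hreg : G.IsRegularOfDegree α)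
    {S : Finset V} (hS : #S ≤ α + 1) :
    incidentEdgeCount G S = #S * α - (#S).choose 2 ↔ G.IsClique (S : Set V) := by
  have hchoose : (#S).choose 2 ≤ #S * α :=
    calc (#S).choose 2 ≤ #S * (#S - 1) :=
          (Nat.choose_two_right _).trans_le (Nat.div_le_self _ _)
      _ ≤ #S * α := Nat.mul_le_mul_left _ (by omega)
  have hsum := hreg.incidentEdgeCount_add_card_innerEdgeFinset S
  have hinner := card_innerEdgeFinset_le G S
  rw [isClique_iff_card_innerEdgeFinset]
  omega

end Incidence

end SimpleGraph

theorem stmt1_general {V : Type*} [Fintype V] [DecidableEq V] [Nonempty V]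
    (G : SimpleGraph V) [DecidableRel G.Adj]
    (α k : ℕ) (hreg : G.IsRegularOfDegree α) (hk : k ≤ α) :
    fileSize G k = k * α - Nat.choose k 2 ↔ ∃ s : Finset V, G.IsNClique k s := by
  obtain ⟨v⟩ := ‹Nonempty V›
  have hk_card : k ≤ (Finset.univ : Finset V).card :=
    hk.trans (hreg v ▸ G.degree_lt_card_verts v).le
  obtain ⟨S₀, -, hS₀⟩ := Finset.exists_subset_card_eq hk_card
  rw [fileSize_eq_iff G ⟨S₀, hS₀⟩ fun S hS =>
    hS ▸ hreg.sub_choose_two_le_incidentEdgeCount S]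
  refine exists_congr fun S => ?_
  rw [isNClique_iff, and_comm]
  refine and_congr_left fun hS => ?_
  subst hS
  exact hreg.incidentEdgeCount_eq_iff_isClique (hk.trans α.le_succ)

theorem stmt1 {V : Type*} [Fintype V] [DecidableEq V] [Nonempty V]
    (G : SimpleGraph V) [DecidableRel G.Adj]
    (α k : ℕ) (hreg : G.IsRegularOfDegree α) (hk2 : 2 ≤ k) (hk : k ≤ α) :
    fileSize G k = k * α - Nat.choose k 2 ↔ ∃ s : Finset V, G.IsNClique k s :=
  stmt1_general G α k hreg hk
end

section
/- Let n and r be integers with 2 ≤ r ≤ n and r dividing n, let T be the (n,r)-Turán graph, and set α = (r−1)·n/r. Let k be an integer with 1 ≤ k ≤ α, and write k = b·r + t with b, t nonnegative integers and t ≤ r − 1. Then M_T(k) = k·α − k(k−1)/2 + r·b(b−1)/2 + b·t. -/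
open SimpleGraph

/-!
For a `k`-set `S`, counting the edges meeting `S` by degrees gives
`2 M(S) = 2 ∑_{v ∈ S} deg v - ∑_{v ∈ S} |N(v) ∩ S|`. In the Turán graph every degree is `α` and
`|N(v) ∩ S| = k - c_{p(v)}`, where `c_i` is the number of vertices of `S` in part `i`; hence
`2 M(S) + k² = 2kα + ∑ c_i²`. As `c² ≥ (2b+1)c - b(b+1)` for every integer `c`, with equality
exactly for `c ∈ {b, b+1}`, the sum `∑ c_i²` is smallest for the balanced distribution
`c_i = b + [i < t]`, which the first `k` vertices realize.
-/

open Finset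

lemma Nat.two_mul_choose_two_add_self (n : ℕ) : 2 * n.choose 2 + n = n ^ 2 := by
  induction n with
  | zero => rfl
  | succ m ih => rw [Nat.choose_succ_succ', Nat.choose_one_right]; linear_combination ih

lemma Nat.two_mul_add_one_mul_le_sq_add (b c : ℕ) : (2 * b + 1) * c ≤ c ^ 2 + (b ^ 2 + b) := by
  rcases le_or_gt c b with h | h <;> nlinarith

lemma Nat.two_mul_add_one_mul_eq_sq_add {b c : ℕ} (h : c = b ∨ c = b + 1) :
    (2 * b + 1) * c = c ^ 2 + (b ^ 2 + b) := by
  rcases h with rfl | rfl <;> ring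

namespace Finset

variable {ι : Type*} (s : Finset ι) (f : ι → ℕ) (b : ℕ)

lemma two_mul_add_one_mul_sum_le :
    (2 * b + 1) * ∑ i ∈ s, f i ≤ ∑ i ∈ s, f i ^ 2 + #s * (b ^ 2 + b) := by
  rw [mul_sum, card_eq_sum_ones, sum_mul, ← sum_add_distrib]
  simp_rw [one_mul]
  exact sum_le_sum fun i _ => Nat.two_mul_add_one_mul_le_sq_add b (f i)

lemma two_mul_add_one_mul_sum_eq (h : ∀ i ∈ s, f i = b ∨ f i = b + 1) :
    (2 * b + 1) * ∑ i ∈ s, f i = ∑ i ∈ s, f i ^ 2 + #s * (b ^ 2 + b) := by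
  rw [mul_sum, card_eq_sum_ones, sum_mul, ← sum_add_distrib]
  simp_rw [one_mul]
  exact sum_congr rfl fun i hi => Nat.two_mul_add_one_mul_eq_sq_add (h i hi)

end Finset

namespace Fin

variable {n r : ℕ}

lemma card_filter_val_mod_eq (hr : 0 < r) (i : ℕ) :
    #{u : Fin n | u.val % r = i % r} = n / r + if i % r < n % r then 1 else 0 := by
  rw [← Nat.count_modEq_card n hr i, Nat.count_eq_card_filter_range, ← card_map valEmbedding,
    map_filter', ← Nat.Iio_eq_range]
  congr 1
  ext x
  rw [mem_filter (p := (· ≡ i [MOD r]))]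
  simp +contextual [exists_iff, Nat.ModEq]

lemma sum_card_filter_val_mod_eq_sum_sq (hr : 0 < r) (S : Finset (Fin n)) :
    ∑ v ∈ S, #{u ∈ S | u.val % r = v.val % r} =
      ∑ i ∈ range r, #{u ∈ S | u.val % r = i} ^ 2 := by
  rw [← sum_fiberwise_of_maps_to fun v _ => mem_range.2 (Nat.mod_lt v.val hr)]
  refine sum_congr rfl fun i _ => ?_
  rw [sum_congr rfl fun v hv => by rw [(mem_filter.1 hv).2], Finset.sum_const, smul_eq_mul, sq]

lemma sum_card_filter_val_mod (hr : 0 < r) (S : Finset (Fin n)) :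
    ∑ i ∈ range r, #{u ∈ S | u.val % r = i} = #S :=
  (card_eq_sum_card_fiberwise fun v _ => mem_range.2 (Nat.mod_lt v.val hr)).symm

lemma card_filter_val_mod_map_castLEEmb {k i : ℕ} (hkn : k ≤ n) (hr : 0 < r) (hi : i < r) :
    #{u ∈ univ.map (castLEEmb hkn) | u.val % r = i} = k / r + if i < k % r then 1 else 0 := by
  rw [← Nat.mod_eq_of_lt hi, ← card_filter_val_mod_eq hr, Nat.mod_eq_of_lt hi, filter_map,
    card_map]
  rfl

end Fin

namespace SimpleGraph

section IncidentSubgraph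

variable {V : Type*} (G : SimpleGraph V) (S : Finset V)

def incidentSubgraph : SimpleGraph V where
  Adj u v := G.Adj u v ∧ (u ∈ S ∨ v ∈ S)
  symm := ⟨fun _ _ h => ⟨h.1.symm, h.2.symm⟩⟩
  loopless := ⟨fun _ h => G.irrefl h.1⟩

@[simp]
lemma incidentSubgraph_adj {u v : V} :
    (G.incidentSubgraph S).Adj u v ↔ G.Adj u v ∧ (u ∈ S ∨ v ∈ S) :=
  Iff.rfl

instance [DecidableRel G.Adj] [DecidableEq V] : DecidableRel (G.incidentSubgraph S).Adj :=
  fun _ _ => inferInstanceAs (Decidable (_ ∧ _))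

lemma edgeSet_incidentSubgraph :
    (G.incidentSubgraph S).edgeSet = {e ∈ G.edgeSet | ∃ v ∈ S, v ∈ e} := by
  ext ⟨u, v⟩
  simp [and_or_left, exists_or]

variable [Fintype V] [DecidableRel G.Adj]

lemma sum_card_filter_adj : ∑ v, #{u ∈ S | G.Adj v u} = ∑ u ∈ S, G.degree u := by
  simpa [bipartiteAbove, bipartiteBelow, ← card_neighborFinset_eq_degree,
    neighborFinset_eq_filter, adj_comm] using
    sum_card_bipartiteAbove_eq_sum_card_bipartiteBelow (s := univ) (t := S) (r := G.Adj)

variable [DecidableEq V]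

lemma incidentEdgeCount_eq_card_edgeFinset :
    incidentEdgeCount G S = #(G.incidentSubgraph S).edgeFinset := by
  rw [incidentEdgeCount, ← edgeSet_incidentSubgraph, Set.ncard_eq_toFinset_card', edgeFinset]

lemma degree_incidentSubgraph_of_mem {v : V} (hv : v ∈ S) :
    (G.incidentSubgraph S).degree v = G.degree v := by
  simp_rw [← card_neighborFinset_eq_degree]
  congr 1
  ext u
  simp [hv]

lemma degree_incidentSubgraph_of_notMem {v : V} (hv : v ∉ S) :
    (G.incidentSubgraph S).degree v = #{u ∈ S | G.Adj v u} := by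
  rw [← card_neighborFinset_eq_degree]
  congr 1
  ext u
  simp [hv, and_comm]

lemma two_mul_incidentEdgeCount_add_sum_card_filter_adj :
    2 * incidentEdgeCount G S + ∑ v ∈ S, #{u ∈ S | G.Adj v u} = 2 * ∑ v ∈ S, G.degree v := by
  have handshake := (G.incidentSubgraph S).sum_degrees_eq_twice_card_edges
  rw [← sum_add_sum_compl S, sum_congr rfl fun v => G.degree_incidentSubgraph_of_mem S,
    sum_congr rfl fun v hv => G.degree_incidentSubgraph_of_notMem S (mem_compl.1 hv)]
    at handshake
  have double_count := G.sum_card_filter_adj S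
  rw [← sum_add_sum_compl S] at double_count
  rw [incidentEdgeCount_eq_card_edgeFinset]
  omega

end IncidentSubgraph

section Turan

variable {n r : ℕ}

lemma card_filter_turanGraph_adj_add (S : Finset (Fin n)) (v : Fin n) :
    #{u ∈ S | (turanGraph n r).Adj v u} + #{u ∈ S | u.val % r = v.val % r} = #S := by
  rw [← card_filter_add_card_filter_not (s := S) (fun u : Fin n => u.val % r = v.val % r),
    add_comm]
  simp only [turanGraph_adj, ne_comm]

lemma degree_turanGraph (hr : 0 < r) (hdvd : r ∣ n) (v : Fin n) :
    (turanGraph n r).degree v = (r - 1) * (n / r) := by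
  have h := card_filter_turanGraph_adj_add (r := r) univ v
  rw [← neighborFinset_eq_filter, card_neighborFinset_eq_degree, card_univ, Fintype.card_fin,
    Fin.card_filter_val_mod_eq hr, Nat.mod_eq_zero_of_dvd hdvd, if_neg (Nat.not_lt_zero _),
    add_zero] at h
  rw [Nat.sub_one_mul, Nat.mul_div_cancel' hdvd]
  omega

lemma two_mul_incidentEdgeCount_turanGraph_add_sq (hr : 0 < r) (hdvd : r ∣ n)
    (S : Finset (Fin n)) :
    2 * incidentEdgeCount (turanGraph n r) S + #S ^ 2 =
      2 * #S * ((r - 1) * (n / r)) + ∑ i ∈ range r, #{u ∈ S | u.val % r = i} ^ 2 := by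
  have count := (turanGraph n r).two_mul_incidentEdgeCount_add_sum_card_filter_adj S
  rw [sum_congr rfl fun v _ => degree_turanGraph hr hdvd v, sum_const, smul_eq_mul] at count
  have split : ∑ v ∈ S, (#{u ∈ S | (turanGraph n r).Adj v u} +
      #{u ∈ S | u.val % r = v.val % r}) = ∑ _v ∈ S, #S :=
    sum_congr rfl fun v _ => card_filter_turanGraph_adj_add S v
  rw [sum_add_distrib, Fin.sum_card_filter_val_mod_eq_sum_sq hr, sum_const, smul_eq_mul] at split
  rw [sq]
  linarith

lemma le_two_mul_incidentEdgeCount_turanGraph (hr : 0 < r) (hdvd : r ∣ n)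
    (S : Finset (Fin n)) (b : ℕ) :
    2 * #S * ((r - 1) * (n / r)) + (2 * b + 1) * #S ≤
      2 * incidentEdgeCount (turanGraph n r) S + #S ^ 2 + r * (b ^ 2 + b) := by
  have h := (range r).two_mul_add_one_mul_sum_le (fun i => #{u ∈ S | u.val % r = i}) b
  rw [Fin.sum_card_filter_val_mod hr, card_range] at h
  linarith [two_mul_incidentEdgeCount_turanGraph_add_sq hr hdvd S]

lemma eq_two_mul_incidentEdgeCount_turanGraph_of_balanced (hr : 0 < r) (hdvd : r ∣ n)
    (S : Finset (Fin n)) (b : ℕ)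
    (hS : ∀ i < r, #{u ∈ S | u.val % r = i} = b ∨ #{u ∈ S | u.val % r = i} = b + 1) :
    2 * #S * ((r - 1) * (n / r)) + (2 * b + 1) * #S =
      2 * incidentEdgeCount (turanGraph n r) S + #S ^ 2 + r * (b ^ 2 + b) := by
  have h := (range r).two_mul_add_one_mul_sum_eq (fun i => #{u ∈ S | u.val % r = i}) b
    fun i hi => hS i (mem_range.1 hi)
  rw [Fin.sum_card_filter_val_mod hr, card_range] at h
  linarith [two_mul_incidentEdgeCount_turanGraph_add_sq hr hdvd S]

end Turan

end SimpleGraph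

lemma two_mul_sub_choose_two_add_sq {k a b r t : ℕ} (hk : k ≤ a) (hkbt : k = b * r + t) :
    2 * (k * a - k.choose 2 + r * b.choose 2 + b * t) + k ^ 2 + r * (b ^ 2 + b) =
      2 * k * a + (2 * b + 1) * k := by
  have hk2 := k.two_mul_choose_two_add_self
  have hb2 := b.two_mul_choose_two_add_self
  have hle : k.choose 2 ≤ k * a := by nlinarith
  zify [hle] at *
  linear_combination (-1 : ℤ) * hk2 + (r : ℤ) * hb2 - 2 * (b : ℤ) * hkbt

theorem stmt3_general (n r b t k : ℕ) (hr : 2 ≤ r) (hdvd : r ∣ n)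
    (hk : k ≤ (r - 1) * (n / r))
    (hkbt : k = b * r + t) (ht : t ≤ r - 1) :
    fileSize (SimpleGraph.turanGraph n r) k =
      k * ((r - 1) * (n / r)) - Nat.choose k 2 + r * Nat.choose b 2 + b * t := by
  have hr0 : 0 < r := by omega
  have hkn : k ≤ n := hk.trans <| (Nat.mul_le_mul_right _ (Nat.sub_le r 1)).trans
    (Nat.mul_div_cancel' hdvd).le
  have hformula := two_mul_sub_choose_two_add_sq hk hkbt
  obtain ⟨hdiv, hmod⟩ :=
    (Nat.div_mod_unique (a := k) (d := b) (c := t) hr0).2 ⟨by rw [hkbt]; ring, by omega⟩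
  set S₀ := univ.map (Fin.castLEEmb hkn)
  have hS₀ : #S₀ = k := by simp [S₀]
  apply le_antisymm
  · refine Nat.sInf_le ⟨S₀, hS₀, ?_⟩
    have h := eq_two_mul_incidentEdgeCount_turanGraph_of_balanced hr0 hdvd S₀ b fun i hi => by
      rw [Fin.card_filter_val_mod_map_castLEEmb hkn hr0 hi, hdiv, hmod]
      split_ifs <;> simp
    rw [hS₀] at h
    omega
  · refine le_csInf ⟨_, S₀, hS₀, rfl⟩ ?_
    rintro _ ⟨S, hS, rfl⟩
    have h := le_two_mul_incidentEdgeCount_turanGraph hr0 hdvd S b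
    rw [hS] at h
    omega

theorem stmt3 (n r b t k : ℕ) (hr : 2 ≤ r) (hrn : r ≤ n) (hdvd : r ∣ n)
    (hk1 : 1 ≤ k) (hk : k ≤ (r - 1) * (n / r))
    (hkbt : k = b * r + t) (ht : t ≤ r - 1) :
    fileSize (SimpleGraph.turanGraph n r) k =
      k * ((r - 1) * (n / r)) - Nat.choose k 2 + r * Nat.choose b 2 + b * t :=
  stmt3_general n r b t k hr hdvd hk hkbt ht
end

section
/- Let α ≥ 2 and let K_{α,α} be the complete bipartite simple graph with both parts of size α. Then for every integer k with 1 ≤ k ≤ α, M_{K_{α,α}}(k) = k·α − k²/4 if k is even, and M_{K_{α,α}}(k) = k·α − (k²−1)/4 if k is odd. -/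
/-!
If `S` has `a` vertices in one part of `K_{n,n}` and `b` in the other, the edges it misses are
exactly those between the `n - a` and `n - b` unchosen vertices, so `S` covers
`n² - (n - a)(n - b) = (a + b) n - a b` edges. For `a + b = k` the product `a b` is at most
`⌊k² / 4⌋`, with equality for the balanced split `a = ⌊k / 2⌋`.
-/

open SimpleGraph

open Finset

lemma Nat.mul_le_sq_add_div_four (a b : ℕ) : a * b ≤ (a + b) ^ 2 / 4 := by
  rw [Nat.le_div_iff_mul_le four_pos, mul_comm, ← mul_assoc]
  exact four_mul_le_sq_add a b

lemma Nat.div_two_mul_sub_div_two (k : ℕ) : k / 2 * (k - k / 2) = k ^ 2 / 4 := by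
  rcases Nat.even_or_odd' k with ⟨m, rfl | rfl⟩
  · rw [show (2 * m) ^ 2 = 4 * (m * m) by ring, show 2 * m / 2 = m by omega,
      show 2 * m - m = m by omega]
    omega
  · rw [show (2 * m + 1) ^ 2 = 4 * (m * (m + 1)) + 1 by ring, show (2 * m + 1) / 2 = m by omega,
      show 2 * m + 1 - m = m + 1 by omega]
    omega

lemma Odd.sq_sub_one_div_four {k : ℕ} (hk : Odd k) : (k ^ 2 - 1) / 4 = k ^ 2 / 4 := by
  obtain ⟨m, rfl⟩ := hk
  rw [show (2 * m + 1) ^ 2 = 4 * (m * (m + 1)) + 1 by ring]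
  omega

section CompleteBipartite

variable {V W : Type*} [Fintype V] [Fintype W]

lemma incidentEdgeCount_completeBipartiteGraph (S : Finset (V ⊕ W)) :
    incidentEdgeCount (completeBipartiteGraph V W) S +
      (Fintype.card V - #S.toLeft) * (Fintype.card W - #S.toRight) =
      Fintype.card V * Fintype.card W := by
  classical
  set covered : Set (V × W) := {p | Sum.inl p.1 ∈ S ∨ Sum.inr p.2 ∈ S}
  have h_edges : {e ∈ (completeBipartiteGraph V W).edgeSet | ∃ v ∈ S, v ∈ e} =
      (fun p : V × W ↦ s(Sum.inl p.1, Sum.inr p.2)) '' covered := by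
    rw [edgeSet_completeBipartiteGraph]
    ext e
    constructor
    · rintro ⟨⟨p, rfl⟩, v, hv, hve⟩
      refine ⟨p, ?_, rfl⟩
      rcases Sym2.mem_iff.mp hve with rfl | rfl
      exacts [Or.inl hv, Or.inr hv]
    · rintro ⟨p, hp | hp, rfl⟩
      exacts [⟨⟨p, rfl⟩, _, hp, Sym2.mem_mk_left _ _⟩, ⟨⟨p, rfl⟩, _, hp, Sym2.mem_mk_right _ _⟩]
  have h_uncovered : coveredᶜ = (↑S.toLeftᶜ ×ˢ ↑S.toRightᶜ : Set (V × W)) := by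
    ext; simp [covered]
  have h_inj : (fun p : V × W ↦ s(Sum.inl p.1, Sum.inr p.2)).Injective := by
    rintro ⟨a, b⟩ ⟨c, d⟩ h
    simpa using h
  rw [incidentEdgeCount, h_edges, Set.ncard_image_of_injective _ h_inj, ← card_compl,
    ← card_compl, ← card_product, ← Set.ncard_coe_finset, coe_product, ← h_uncovered,
    Set.ncard_add_ncard_compl, Nat.card_eq_fintype_card, Fintype.card_prod]

lemma incidentEdgeCount_completeBipartiteGraph_self (S : Finset (V ⊕ V)) :
    incidentEdgeCount (completeBipartiteGraph V V) S + #S.toLeft * #S.toRight =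
      #S * Fintype.card V := by
  have h := incidentEdgeCount_completeBipartiteGraph S
  have hl : #S.toLeft ≤ Fintype.card V := card_le_univ _
  have hr : #S.toRight ≤ Fintype.card V := card_le_univ _
  rw [← card_toLeft_add_card_toRight]
  zify [hl, hr] at h ⊢
  linear_combination h

theorem fileSize_completeBipartiteGraph_self {k : ℕ} (hk : k ≤ 2 * Fintype.card V) :
    fileSize (completeBipartiteGraph V V) k = k * Fintype.card V - k ^ 2 / 4 := by
  refine IsLeast.csInf_eq ⟨?_, ?_⟩
  · obtain ⟨A, -, hA⟩ := exists_subset_card_eq (s := (univ : Finset V)) (n := k / 2)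
      (by rw [card_univ]; omega)
    obtain ⟨B, -, hB⟩ := exists_subset_card_eq (s := (univ : Finset V)) (n := k - k / 2)
      (by rw [card_univ]; omega)
    have hAB : #(A.disjSum B) = k := by rw [card_disjSum, hA, hB]; omega
    have h := incidentEdgeCount_completeBipartiteGraph_self (A.disjSum B)
    rw [toLeft_disjSum, toRight_disjSum, hA, hB, Nat.div_two_mul_sub_div_two, hAB] at h
    exact ⟨A.disjSum B, hAB, by omega⟩
  · rintro _ ⟨S, rfl, rfl⟩
    have h := incidentEdgeCount_completeBipartiteGraph_self S
    have h_prod := Nat.mul_le_sq_add_div_four #S.toLeft #S.toRight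
    rw [card_toLeft_add_card_toRight] at h_prod
    omega

end CompleteBipartite

theorem stmt5_general (α k : ℕ) (hk : k ≤ α) :
    (Even k → fileSize (completeBipartiteGraph (Fin α) (Fin α)) k = k * α - k ^ 2 / 4) ∧
    (Odd k → fileSize (completeBipartiteGraph (Fin α) (Fin α)) k = k * α - (k ^ 2 - 1) / 4) := by
  have h := fileSize_completeBipartiteGraph_self (V := Fin α) (k := k)
    (by rw [Fintype.card_fin]; omega)
  rw [Fintype.card_fin] at h
  exact ⟨fun _ ↦ h, fun hodd ↦ hodd.sq_sub_one_div_four ▸ h⟩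

theorem stmt5 (α k : ℕ) (hα : 2 ≤ α) (hk1 : 1 ≤ k) (hk : k ≤ α) :
    (Even k → fileSize (completeBipartiteGraph (Fin α) (Fin α)) k = k * α - k ^ 2 / 4) ∧
    (Odd k → fileSize (completeBipartiteGraph (Fin α) (Fin α)) k = k * α - (k ^ 2 - 1) / 4) :=
  stmt5_general α k hk
end

section
/- Let G be an α-regular finite simple graph on a nonempty vertex set and let k be an integer with 1 ≤ k ≤ α. Then M_G(k) ≤ k·α − k + 1. -/
open SimpleGraph

/-!
Take a vertex `v` together with `k - 1` of its neighbours. The edges at `v` number `α`, and each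
neighbour `t` contributes at most `α - 1` further edges, since its edge to `v` is already counted.
Hence these `k` vertices meet at most `α + (k - 1)(α - 1) = kα - k + 1` edges.
-/

open Finset

namespace SimpleGraph

variable {V : Type*} (G : SimpleGraph V)

theorem fileSize_le_incidentEdgeCount (S : Finset V) :
    fileSize G S.card ≤ incidentEdgeCount G S :=
  Nat.sInf_le ⟨S, rfl, rfl⟩

variable [DecidableEq V] [G.LocallyFinite]

theorem incidentEdgeCount_eq_card_biUnion (S : Finset V) :
    incidentEdgeCount G S = #(S.biUnion fun v => G.incidenceFinset v) := by
  rw [incidentEdgeCount, ← Set.ncard_coe_finset]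
  congr 1
  ext e
  simp [incidenceSet]

theorem card_incidenceFinset_sdiff_le {v t : V} (hvt : G.Adj v t) :
    #(G.incidenceFinset t \ G.incidenceFinset v) ≤ G.degree t - 1 := by
  have hv : s(v, t) ∈ G.incidenceFinset v := by simpa [incidenceSet] using hvt
  have ht : s(v, t) ∈ G.incidenceFinset t := by simpa [incidenceSet] using hvt
  calc #(G.incidenceFinset t \ G.incidenceFinset v)
      ≤ #((G.incidenceFinset t).erase s(v, t)) := by
        rw [← sdiff_singleton_eq_erase]
        exact card_le_card (sdiff_subset_sdiff subset_rfl (singleton_subset_iff.2 hv))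
    _ = G.degree t - 1 := by rw [card_erase_of_mem ht, card_incidenceFinset_eq_degree]

theorem incidentEdgeCount_insert_le {v : V} {T : Finset V} (hT : ∀ t ∈ T, G.Adj v t) :
    incidentEdgeCount G (insert v T) ≤ G.degree v + ∑ t ∈ T, (G.degree t - 1) := by
  rw [incidentEdgeCount_eq_card_biUnion, biUnion_insert, union_comm, ← card_sdiff_add_card,
    add_comm, card_incidenceFinset_eq_degree]
  gcongr
  calc #((T.biUnion fun t => G.incidenceFinset t) \ G.incidenceFinset v)
      ≤ #(T.biUnion fun t => G.incidenceFinset t \ G.incidenceFinset v) := by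
        refine card_le_card fun e he => ?_
        simp only [mem_sdiff, mem_biUnion] at he ⊢
        obtain ⟨⟨t, ht, het⟩, hev⟩ := he
        exact ⟨t, ht, het, hev⟩
    _ ≤ ∑ t ∈ T, #(G.incidenceFinset t \ G.incidenceFinset v) := card_biUnion_le
    _ ≤ ∑ t ∈ T, (G.degree t - 1) :=
        sum_le_sum fun t ht => G.card_incidenceFinset_sdiff_le (hT t ht)

end SimpleGraph

theorem stmt6 {V : Type*} [Fintype V] [Nonempty V] (G : SimpleGraph V) [DecidableRel G.Adj]
    (α k : ℕ) (hreg : G.IsRegularOfDegree α) (hk1 : 1 ≤ k) (hk : k ≤ α) :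
    fileSize G k ≤ k * α - k + 1 := by
  classical
  obtain ⟨v⟩ := ‹Nonempty V›
  obtain ⟨T, hTv, hTcard⟩ : ∃ T ⊆ G.neighborFinset v, #T = k - 1 :=
    exists_subset_card_eq (by rw [card_neighborFinset_eq_degree, hreg v]; omega)
  have hvT : v ∉ T := fun hv => G.irrefl ((G.mem_neighborFinset v v).1 (hTv hv))
  have hcard : #(insert v T) = k := by rw [card_insert_of_notMem hvT, hTcard]; omega
  calc fileSize G k
      ≤ incidentEdgeCount G (insert v T) := hcard ▸ G.fileSize_le_incidentEdgeCount _
    _ ≤ G.degree v + ∑ t ∈ T, (G.degree t - 1) :=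
        G.incidentEdgeCount_insert_le fun t ht => (G.mem_neighborFinset v t).1 (hTv ht)
    _ = α + (k - 1) * (α - 1) := by
        rw [hreg v, sum_congr rfl fun t _ => by rw [hreg t], sum_const, hTcard, smul_eq_mul]
    _ = k * α - k + 1 := by
        obtain ⟨j, rfl⟩ := Nat.exists_eq_add_of_le' hk1
        obtain ⟨a, rfl⟩ := Nat.exists_eq_add_of_le' (hk1.trans hk)
        simp only [Nat.add_sub_cancel, Nat.add_mul, Nat.mul_add]
        omega
end

section
/- Let G be an α-regular finite simple graph on a nonempty vertex set and let k be an integer with 1 ≤ k ≤ α. Then the girth of G is at least k+1 if and only if M_G(k) = k·α − (k−1). -/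
open SimpleGraph

/-!
Write `e(S)` for the number of edges with both ends in `S`. Double counting gives
`incidentEdgeCount G S + e(S) = α |S|` in an `α`-regular graph, so minimising the incident edges
over `k`-sets means maximising `e(S)`.

If the girth exceeds `k`, every `k`-set induces a forest, so `e(S) ≤ k - 1`; conversely, since
`k ≤ α`, a `k`-set with `e(S) ≥ k - 1` is obtained by growing a tree greedily from one vertex.
If instead there is a cycle of length `g ≤ k`, its `g` vertices span at least `g` edges, and
growing greedily from them yields a `k`-set with `e(S) ≥ k`, i.e. fewer incident edges.
-/

open Finset

theorem Finset.card_filter_mem_eq_ite_add_ite {V : Type*} [DecidableEq V] (S : Finset V)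
    {e : Sym2 V} (he : ¬e.IsDiag) :
    #{v ∈ S | v ∈ e} =
      (if ∃ v ∈ S, v ∈ e then 1 else 0) + (if e ∈ S.sym2 then 1 else 0) := by
  induction e using Sym2.ind with
  | _ a b =>
  have hab : a ≠ b := he
  have hmeet : (∃ v ∈ S, v ∈ s(a, b)) ↔ a ∈ S ∨ b ∈ S := by
    simp [Sym2.mem_iff, and_or_left, exists_or]
  rw [if_congr hmeet rfl rfl, if_congr mk_mem_sym2_iff rfl rfl]
  by_cases ha : a ∈ S <;> by_cases hb : b ∈ S <;>
    simp [Sym2.mem_iff, filter_or, filter_eq', ha, hb, card_pair hab]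

namespace SimpleGraph

variable {V : Type*} {G : SimpleGraph V}

theorem IsAcyclic.card_edgeFinset_lt [Fintype V] [Nonempty V] [Fintype G.edgeSet]
    (hG : G.IsAcyclic) : #G.edgeFinset < Fintype.card V := by
  obtain ⟨T, hGT, -, hT⟩ := connected_top.exists_isTree_le_of_le_of_isAcyclic le_top hG
  classical
  have := hT.card_edgeFinset
  have := card_le_card (edgeFinset_mono hGT)
  omega

theorem Walk.IsCycle.length_le_card [Fintype V] {a : V} {w : G.Walk a a} (hw : w.IsCycle) :
    w.length ≤ Fintype.card V := by
  have := hw.support_nodup.length_le_card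
  rwa [List.length_tail, length_support, Nat.add_sub_cancel] at this

theorem Walk.IsCycle.card_support_tail_toFinset [DecidableEq V] {a : V} {w : G.Walk a a}
    (hw : w.IsCycle) : #w.support.tail.toFinset = w.length := by
  rw [List.toFinset_card_of_nodup hw.support_nodup, List.length_tail, length_support,
    Nat.add_sub_cancel]

theorem isAcyclic_induce_of_card_lt_egirth (S : Finset V) (hS : (#S : ℕ∞) < G.egirth) :
    (G.induce (S : Set V)).IsAcyclic := by
  intro a w hw
  have hlen : (w.length : ℕ∞) ≤ #S := by
    exact_mod_cast Fintype.card_coe S ▸ hw.length_le_card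
  exact (hS.trans_le ((Embedding.induce _).isContained.egirth_le.trans
    (egirth_le_length hw))).not_ge hlen

section Counting

variable [Fintype V] [DecidableEq V] [DecidableRel G.Adj]

theorem card_edgeFinset_inter_sym2_lt_of_card_lt_egirth {S : Finset V} (hS : S.Nonempty)
    (hg : (#S : ℕ∞) < G.egirth) : #(G.edgeFinset ∩ S.sym2) < #S := by
  have : Nonempty (S : Set V) := hS.to_subtype
  have hlt := (isAcyclic_induce_of_card_lt_egirth S hg).card_edgeFinset_lt
  have hmap := map_edgeFinset_induce (G := G) (s := (S : Set V))
  rw [Finset.toFinset_coe] at hmap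
  rw [← hmap, card_map]
  convert hlt using 2 <;> simp

theorem incidentEdgeCount_eq_card_filter (S : Finset V) :
    incidentEdgeCount G S = #{e ∈ G.edgeFinset | ∃ v ∈ S, v ∈ e} := by
  rw [incidentEdgeCount, ← Set.ncard_coe_finset]
  congr
  ext
  simp

theorem incidentEdgeCount_add_card_edgeFinset_inter_sym2 (S : Finset V) :
    incidentEdgeCount G S + #(G.edgeFinset ∩ S.sym2) = ∑ v ∈ S, G.degree v := by
  calc incidentEdgeCount G S + #(G.edgeFinset ∩ S.sym2)
      = ∑ e ∈ G.edgeFinset,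
          ((if ∃ v ∈ S, v ∈ e then 1 else 0) + (if e ∈ S.sym2 then 1 else 0)) := by
        rw [sum_add_distrib, sum_boole, sum_boole, incidentEdgeCount_eq_card_filter,
          filter_mem_eq_inter, inter_comm]
        simp
    _ = ∑ e ∈ G.edgeFinset, #{v ∈ S | v ∈ e} :=
        sum_congr rfl fun e he ↦ (card_filter_mem_eq_ite_add_ite S
          (G.not_isDiag_of_mem_edgeSet (mem_edgeFinset.1 he))).symm
    _ = ∑ v ∈ S, #{e ∈ G.edgeFinset | v ∈ e} :=
        (sum_card_bipartiteAbove_eq_sum_card_bipartiteBelow _).symm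
    _ = ∑ v ∈ S, G.degree v := by
        simp_rw [← incidenceFinset_eq_filter, card_incidenceFinset_eq_degree]

theorem IsRegularOfDegree.incidentEdgeCount_add_card_edgeFinset_inter_sym2 {α : ℕ}
    (hreg : G.IsRegularOfDegree α) (S : Finset V) :
    incidentEdgeCount G S + #(G.edgeFinset ∩ S.sym2) = #S * α :=
  (SimpleGraph.incidentEdgeCount_add_card_edgeFinset_inter_sym2 S).trans
    (sum_const_nat fun v _ ↦ hreg v)

theorem Walk.IsCycle.length_le_card_edgeFinset_inter_sym2 {a : V} {w : G.Walk a a}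
    (hw : w.IsCycle) : w.length ≤ #(G.edgeFinset ∩ w.support.tail.toFinset.sym2) := by
  have hsupport : ∀ x ∈ w.support, x ∈ w.support.tail := by
    rw [← w.cons_tail_support]
    rintro x (_ | ⟨_, hx⟩)
    exacts [end_mem_tail_support hw.not_nil, hx]
  calc w.length = #w.edges.toFinset := by
        rw [List.toFinset_card_of_nodup hw.edges_nodup, length_edges]
    _ ≤ #(G.edgeFinset ∩ w.support.tail.toFinset.sym2) := by
        refine card_le_card fun e he ↦ ?_
        rw [List.mem_toFinset] at he
        refine mem_inter.2 ⟨mem_edgeFinset.2 (w.edges_subset_edgeSet he), mem_sym2_iff.2 ?_⟩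
        exact fun x hx ↦ List.mem_toFinset.2 (hsupport x (mem_support_of_mem_edges he hx))

theorem exists_notMem_card_edgeFinset_inter_sym2_lt {S : Finset V} (hS : S.Nonempty)
    (hdeg : ∀ v, #S ≤ G.degree v) :
    ∃ w ∉ S, #(G.edgeFinset ∩ S.sym2) < #(G.edgeFinset ∩ (insert w S).sym2) := by
  obtain ⟨v, hv⟩ := hS
  obtain ⟨w, hvw, hw⟩ : ∃ w, G.Adj v w ∧ w ∉ S := by
    by_contra! h
    have hsub : G.neighborFinset v ⊆ S.erase v := fun w hw ↦
      mem_erase.2 ⟨(G.ne_of_adj ((mem_neighborFinset ..).1 hw)).symm,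
        h w ((mem_neighborFinset ..).1 hw)⟩
    have := card_le_card hsub
    rw [card_neighborFinset_eq_degree, card_erase_of_mem hv] at this
    have := hdeg v
    have := card_pos.2 ⟨v, hv⟩
    omega
  refine ⟨w, hw, card_lt_card <| (ssubset_iff_of_subset <|
    inter_subset_inter_left <| sym2_mono <| subset_insert w S).2 ⟨s(v, w), ?_, ?_⟩⟩
  · exact mem_inter.2 ⟨mem_edgeFinset.2 hvw,
      mk_mem_sym2_iff.2 ⟨mem_insert_of_mem hv, mem_insert_self w S⟩⟩
  · exact fun h ↦ hw (mk_mem_sym2_iff.1 (mem_inter.1 h).2).2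

theorem exists_card_eq_card_edgeFinset_inter_sym2_add_le {S : Finset V} (hS : S.Nonempty)
    {n : ℕ} (hSn : #S ≤ n) (hdeg : ∀ v, n ≤ G.degree v + 1) :
    ∃ T : Finset V, #T = n ∧
      #(G.edgeFinset ∩ S.sym2) + (n - #S) ≤ #(G.edgeFinset ∩ T.sym2) := by
  induction n with
  | zero => exact absurd (card_pos.2 hS) (by omega)
  | succ n ih =>
    rcases hSn.eq_or_lt with hSn | hSn
    · exact ⟨S, hSn, by simp [hSn]⟩
    obtain ⟨T, hT, hST⟩ := ih (by omega) fun v ↦ by have := hdeg v; omega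
    have hTne : T.Nonempty := card_pos.1 (by have := card_pos.2 hS; omega)
    obtain ⟨w, hw, hlt⟩ := exists_notMem_card_edgeFinset_inter_sym2_lt (G := G) hTne
      fun v ↦ by have := hdeg v; omega
    exact ⟨insert w T, by rw [card_insert_of_notMem hw, hT], by omega⟩

end Counting

end SimpleGraph

theorem fileSize_le_incidentEdgeCount {V : Type*} {G : SimpleGraph V} {S : Finset V} {k : ℕ}
    (hS : #S = k) : fileSize G k ≤ incidentEdgeCount G S :=
  Nat.sInf_le ⟨S, hS, rfl⟩

theorem fileSize_eq_incidentEdgeCount {V : Type*} {G : SimpleGraph V} {T : Finset V} {k : ℕ}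
    (hT : #T = k)
    (hmin : ∀ S : Finset V, #S = k → incidentEdgeCount G T ≤ incidentEdgeCount G S) :
    fileSize G k = incidentEdgeCount G T :=
  le_antisymm (fileSize_le_incidentEdgeCount hT) <|
    le_csInf ⟨_, T, hT, rfl⟩ fun _ ⟨S, hS, hm⟩ ↦ hm ▸ hmin S hS

theorem stmt7 {V : Type*} [Fintype V] [Nonempty V] (G : SimpleGraph V) [DecidableRel G.Adj]
    (α k : ℕ) (hreg : G.IsRegularOfDegree α) (hk1 : 1 ≤ k) (hk : k ≤ α) :
    ((k : ℕ∞) + 1 ≤ G.egirth) ↔ fileSize G k = k * α - (k - 1) := by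
  classical
  have hdeg : ∀ v, k ≤ G.degree v + 1 := fun v ↦ by rw [hreg v]; omega
  have hcount (S : Finset V) (hS : #S = k) :
      incidentEdgeCount G S + #(G.edgeFinset ∩ S.sym2) = k * α :=
    hS ▸ hreg.incidentEdgeCount_add_card_edgeFinset_inter_sym2 S
  constructor
  · intro hg
    have hforest (S : Finset V) (hS : #S = k) : #(G.edgeFinset ∩ S.sym2) < k :=
      hS ▸ card_edgeFinset_inter_sym2_lt_of_card_lt_egirth (card_pos.1 (by omega))
        (hS ▸ (ENat.add_one_le_iff (ENat.natCast_ne_top k)).1 hg)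
    obtain ⟨x⟩ := ‹Nonempty V›
    obtain ⟨T, hT, hTedges⟩ :=
      exists_card_eq_card_edgeFinset_inter_sym2_add_le (singleton_nonempty x) (by simpa) hdeg
    rw [card_singleton] at hTedges
    have := hcount T hT
    have := hforest T hT
    rw [fileSize_eq_incidentEdgeCount hT fun S hS ↦ by
      have := hcount S hS; have := hforest S hS; omega]
    omega
  · intro hfs
    by_contra! hg
    have hcyc : ¬G.IsAcyclic := fun h ↦ by simp [h.egirth_eq_top] at hg
    obtain ⟨a, w, hw, hlen⟩ := exists_egirth_eq_length.2 hcyc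
    have hwk : w.length ≤ k := by
      rw [hlen] at hg
      exact_mod_cast (ENat.lt_add_one_iff (ENat.natCast_ne_top k)).1 hg
    have hwcard := hw.card_support_tail_toFinset
    obtain ⟨T, hT, hTedges⟩ := exists_card_eq_card_edgeFinset_inter_sym2_add_le
      (card_pos.1 (by have := hw.three_le_length; omega)) (hwcard ▸ hwk) hdeg
    have := fileSize_le_incidentEdgeCount (G := G) hT
    have := hcount T hT
    have := hw.length_le_card_edgeFinset_inter_sym2
    omega
end

section
/- Let n, α, k be integers with α ≥ 2, k ≥ 1 and n ≥ α·k − α − k + 3. Define φ : {1,…,k} → ℤ by φ(1) = α and φ(ℓ+1) = φ(ℓ) + α − ⌈(2·φ(ℓ) − ℓ·α)/(n − ℓ)⌉ for 1 ≤ ℓ ≤ k−1, where ⌈·⌉ denotes the ceiling of the rational number. Then φ(k) = k·α − k + 1. -/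
/-- The recursive bound `φ` of El Rouayheb and Ramchandran for `ρ = 2`:
`φ(1) = α` and `φ(ℓ+1) = φ(ℓ) + α - ⌈(2φ(ℓ) - ℓα)/(n - ℓ)⌉`. -/
noncomputable def phiBound (n α : ℤ) : ℕ → ℤ
  | 0 => α
  | 1 => α
  | (ℓ + 2) =>
      phiBound n α (ℓ + 1) + α -
        ⌈((2 * phiBound n α (ℓ + 1) - ((ℓ : ℤ) + 1) * α : ℤ) : ℚ) / ((n : ℚ) - ((ℓ : ℚ) + 1))⌉

/-! Along the claimed closed form `φ(ℓ) = ℓ(α - 1) + 1` the ratio in the recursion is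
`(ℓ(α - 2) + 2)/(n - ℓ)`, which lies in `(0, 1]` exactly while `ℓ(α - 1) + 2 ≤ n`; the ceiling is
then `1`, so each step adds `α - 1`. The hypothesis on `n` is this condition at `ℓ = k - 1`. -/

theorem Int.ceil_div_eq_one {K : Type*} [Field K] [LinearOrder K] [IsStrictOrderedRing K]
    [FloorRing K] {a b : K} (ha : 0 < a) (hab : a ≤ b) : ⌈a / b⌉ = 1 := by
  rw [Int.ceil_eq_iff, Int.cast_one, sub_self]
  exact ⟨div_pos ha (ha.trans_le hab), div_le_one_of_le₀ hab (ha.le.trans hab)⟩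

theorem phiBound_succ_succ_of_eq {n α : ℤ} (hα : 2 ≤ α) {ℓ : ℕ}
    (hn : ((ℓ : ℤ) + 1) * (α - 1) + 2 ≤ n)
    (hφ : phiBound n α (ℓ + 1) = ((ℓ : ℤ) + 1) * (α - 1) + 1) :
    phiBound n α (ℓ + 2) = ((ℓ : ℤ) + 1 + 1) * (α - 1) + 1 := by
  have hnum : 2 * phiBound n α (ℓ + 1) - ((ℓ : ℤ) + 1) * α = ((ℓ : ℤ) + 1) * (α - 2) + 2 := by
    rw [hφ]; ring
  have hceil : ⌈((2 * phiBound n α (ℓ + 1) - ((ℓ : ℤ) + 1) * α : ℤ) : ℚ) /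
      ((n : ℚ) - ((ℓ : ℚ) + 1))⌉ = 1 := by
    rw [hnum]
    apply Int.ceil_div_eq_one
    · have : (0 : ℤ) < ((ℓ : ℤ) + 1) * (α - 2) + 2 := by positivity
      exact_mod_cast this
    · have : ((ℓ : ℤ) + 1) * (α - 2) + 2 ≤ n - ((ℓ : ℤ) + 1) := by linarith
      exact_mod_cast this
  rw [phiBound, hceil, hφ]
  ring

theorem phiBound_eq_of_succ_le {n α : ℤ} {k : ℕ} (hα : 2 ≤ α)
    (hn : ((k : ℤ) - 1) * (α - 1) + 2 ≤ n) :
    ∀ ℓ : ℕ, ℓ + 1 ≤ k → phiBound n α (ℓ + 1) = ((ℓ : ℤ) + 1) * (α - 1) + 1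
  | 0, _ => by simp [phiBound]
  | ℓ + 1, hℓ => by
    push_cast
    refine phiBound_succ_succ_of_eq hα ?_ (phiBound_eq_of_succ_le hα hn ℓ (by omega))
    have : (ℓ : ℤ) + 1 ≤ (k : ℤ) - 1 := by omega
    nlinarith

theorem stmt9 (n α : ℤ) (k : ℕ) (hα : 2 ≤ α) (hk : 1 ≤ k)
    (hn : α * (k : ℤ) - α - (k : ℤ) + 3 ≤ n) :
    phiBound n α k = (k : ℤ) * α - (k : ℤ) + 1 := by
  obtain ⟨ℓ, rfl⟩ := Nat.exists_eq_add_of_le' hk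
  rw [phiBound_eq_of_succ_le hα (by push_cast at hn ⊢; linarith) ℓ le_rfl]
  push_cast
  ring
end

section
/- For every even integer α ≥ 2 and every odd integer n with 2n ≥ 5α, there exists an α-regular finite simple graph on n vertices that contains no triangle (no clique on 3 vertices). -/
/-!
Write `α = 2t` and `n = 2m + 1`. If `3t ≤ m + 1`, take the circulant graph on `ℤ/n` whose jumps
are the `2t` residues `m + 1 - t, …, m + t` around `n / 2`: this set is symmetric and sum-free,
so the graph is `2t`-regular and triangle-free.

Otherwise `5t ≤ n < 6t`, and we blow up the 5-cycle `A – B – C – D – E` with `|A| = 6t - n`,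
`|B| = |E| = t` and `|C| = |D| = n - 4t`, joining consecutive parts completely except `C` and `D`,
two copies of `ℤ/(n - 4t)` joined by a `t`-regular bipartite circulant. Every vertex has degree
`2t`, and the graph maps homomorphically onto the triangle-free 5-cycle.
-/

open Finset
open scoped Pointwise

namespace SimpleGraph

variable {V W : Type*} {G : SimpleGraph V} {H : SimpleGraph W}

theorem IsRegularOfDegree.of_iso [LocallyFinite G] [LocallyFinite H] {d : ℕ} (e : G ≃g H)
    (h : G.IsRegularOfDegree d) : H.IsRegularOfDegree d := fun w => by
  rw [← e.apply_symm_apply w, e.degree_eq]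
  exact h _

theorem CliqueFree.of_hom {n : ℕ} (f : G →g H) (h : H.CliqueFree n) : G.CliqueFree n := by
  classical
  intro s hs
  have hinj : Set.InjOn f s := fun x hx y hy hxy => by
    by_contra hne
    exact (f.map_adj (hs.1 hx hy hne)).ne hxy
  refine h (s.image f) ⟨?_, by rw [card_image_of_injOn hinj, hs.2]⟩
  rw [coe_image]
  rintro _ ⟨x, hx, rfl⟩ _ ⟨y, hy, rfl⟩ hne
  exact f.map_adj (hs.1 hx hy (ne_of_apply_ne f hne))

theorem exists_fin_isRegularOfDegree_cliqueFree [Fintype V] [DecidableRel G.Adj] {n d k : ℕ}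
    (hV : Fintype.card V = n) (hreg : G.IsRegularOfDegree d) (hcf : G.CliqueFree k) :
    ∃ G' : SimpleGraph (Fin n), ∃ _ : DecidableRel G'.Adj,
      G'.IsRegularOfDegree d ∧ G'.CliqueFree k := by
  classical
  exact ⟨G.overFin hV, inferInstance, hreg.of_iso (G.overFinIso hV),
    hcf.of_hom (G.overFinIso hV).symm.toHom⟩

section Circulant

variable {Γ : Type*} [AddGroup Γ]

theorem circulantGraph_adj_of_neg_eq {s : Set Γ} (hs : -s = s) {u v : Γ} :
    (circulantGraph s).Adj u v ↔ u ≠ v ∧ u - v ∈ s := by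
  have : v - u ∈ s ↔ u - v ∈ s := by rw [← hs, Set.mem_neg, neg_sub, hs]
  rw [circulantGraph_adj, this, or_self]

theorem circulantGraph_cliqueFree_three {s : Set Γ} (hs : -s = s)
    (hsum : ∀ a ∈ s, ∀ b ∈ s, a + b ∉ s) : (circulantGraph s).CliqueFree 3 := by
  classical
  intro c hc
  obtain ⟨x, y, z, hxy, hxz, hyz, -⟩ := is3Clique_iff.1 hc
  rw [circulantGraph_adj_of_neg_eq hs] at hxy hxz hyz
  exact hsum _ hxy.2 _ hyz.2 (by rw [sub_add_sub_cancel]; exact hxz.2)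

variable [Fintype Γ] [DecidableEq Γ]

theorem card_filter_sub_right_mem (S : Finset Γ) (u : Γ) : #{v | v - u ∈ S} = #S :=
  card_equiv (Equiv.subRight u) (by simp)

theorem card_filter_sub_left_mem (S : Finset Γ) (v : Γ) : #{u | v - u ∈ S} = #S :=
  card_equiv (Equiv.subLeft v) (by simp)

theorem circulantGraph_isRegularOfDegree {s : Finset Γ}
    [DecidableRel (circulantGraph (s : Set Γ)).Adj] (hs : -s = s) (h0 : 0 ∉ s) :
    (circulantGraph (s : Set Γ)).IsRegularOfDegree #s := by
  intro u
  rw [← card_neighborFinset_eq_degree, neighborFinset_eq_filter, ← card_filter_sub_left_mem s u]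
  congr 1
  ext v
  have hs' : -(s : Set Γ) = s := by rw [← coe_neg, hs]
  have hne : u - v ∈ s → u ≠ v := fun h huv => h0 (by rwa [huv, sub_self] at h)
  simp only [mem_filter, mem_univ, true_and, circulantGraph_adj_of_neg_eq hs', mem_coe]
  exact ⟨And.right, fun h => ⟨hne h, h⟩⟩

end Circulant

theorem cycleGraph_five_cliqueFree_three : (cycleGraph 5).CliqueFree 3 := by
  rw [cycleGraph_eq_circulantGraph, circulantGraph_eq_symm]
  apply circulantGraph_cliqueFree_three
  · simp [Set.pair_comm]
  · simp only [Set.mem_union, Set.mem_singleton_iff, Set.mem_neg]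
    decide

section PentagonBlowup

variable (A B : Type*) {Γ : Type*} [AddGroup Γ]

/-- The parts `A, B, C, D, E` of the 5-cycle are the five summands in this order: `C` and `D` are
two copies of `Γ`, and `E` is a second copy of `B`. -/
def pentagonBlowupRel (S : Set Γ) : A ⊕ B ⊕ Γ ⊕ Γ ⊕ B → A ⊕ B ⊕ Γ ⊕ Γ ⊕ B → Prop
  | .inl _, .inr (.inl _) => True
  | .inr (.inl _), .inr (.inr (.inl _)) => True
  | .inr (.inr (.inl u)), .inr (.inr (.inr (.inl v))) => v - u ∈ S
  | .inr (.inr (.inr (.inl _))), .inr (.inr (.inr (.inr _))) => True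
  | .inr (.inr (.inr (.inr _))), .inl _ => True
  | _, _ => False

def pentagonBlowup (S : Set Γ) : SimpleGraph (A ⊕ B ⊕ Γ ⊕ Γ ⊕ B) :=
  fromRel (pentagonBlowupRel A B S)

def pentagonBlowupHom (S : Set Γ) : pentagonBlowup A B S →g cycleGraph 5 where
  toFun
    | .inl _ => 0
    | .inr (.inl _) => 1
    | .inr (.inr (.inl _)) => 2
    | .inr (.inr (.inr (.inl _))) => 3
    | .inr (.inr (.inr (.inr _))) => 4
  map_rel' := by
    rintro (_|_|_|_|_) (_|_|_|_|_) <;> simp [pentagonBlowup, pentagonBlowupRel, cycleGraph_adj] <;>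
      decide

theorem pentagonBlowup_cliqueFree_three (S : Set Γ) : (pentagonBlowup A B S).CliqueFree 3 :=
  cycleGraph_five_cliqueFree_three.of_hom (pentagonBlowupHom A B S)

theorem pentagonBlowup_isRegularOfDegree [Fintype A] [Fintype B] [Fintype Γ] [DecidableEq Γ]
    {S : Finset Γ} [DecidableRel (pentagonBlowup A B (S : Set Γ)).Adj]
    (hB : Fintype.card B = #S) (hAΓ : Fintype.card A + Fintype.card Γ = 2 * #S) :
    (pentagonBlowup A B (S : Set Γ)).IsRegularOfDegree (2 * #S) := by
  intro x
  rw [← card_neighborFinset_eq_degree, neighborFinset_eq_filter, card_filter]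
  simp only [Fintype.sum_sum_type]
  rcases x with _ | _ | u | v | _ <;>
    simp [pentagonBlowup, pentagonBlowupRel, card_filter_sub_right_mem,
      card_filter_sub_left_mem] <;> omega

end PentagonBlowup

end SimpleGraph

section MiddleInterval

def middleInterval (m t : ℕ) : Finset (Fin (2 * m + 1)) :=
  {x | m + 1 - t ≤ x.val ∧ x.val ≤ m + t}

variable {m t : ℕ}

theorem mem_middleInterval {x : Fin (2 * m + 1)} :
    x ∈ middleInterval m t ↔ m + 1 - t ≤ x.val ∧ x.val ≤ m + t := by
  simp [middleInterval]

theorem neg_middleInterval : -middleInterval m t = middleInterval m t := by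
  ext x
  have hx := Fin.val_add_eq_ite x (-x)
  rw [add_neg_cancel, Fin.val_zero] at hx
  have := x.isLt
  have := (-x).isLt
  rw [mem_neg', mem_middleInterval, mem_middleInterval]
  split_ifs at hx <;> omega

theorem zero_notMem_middleInterval (ht : t ≤ m) : 0 ∉ middleInterval m t := by
  rw [mem_middleInterval, Fin.val_zero]
  omega

theorem card_middleInterval (ht : t ≤ m) : #(middleInterval m t) = 2 * t := by
  have : (middleInterval m t).map Fin.valEmbedding = Icc (m + 1 - t) (m + t) := by
    ext k
    simp only [mem_map, mem_middleInterval, Fin.valEmbedding_apply, mem_Icc]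
    exact ⟨by rintro ⟨x, hx, rfl⟩; exact hx, fun hk => ⟨⟨k, by omega⟩, hk, rfl⟩⟩
  rw [← card_map, this, Nat.card_Icc]
  omega

theorem add_notMem_middleInterval (ht : 3 * t ≤ m + 1) {a b : Fin (2 * m + 1)}
    (ha : a ∈ middleInterval m t) (hb : b ∈ middleInterval m t) :
    a + b ∉ middleInterval m t := by
  rw [mem_middleInterval] at *
  rw [Fin.val_add_eq_ite]
  split_ifs <;> omega

end MiddleInterval

open SimpleGraph

theorem stmt11_general (α n : ℕ) (hαe : Even α) (hn : Odd n) (h5α : 5 * α ≤ 2 * n) :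
    ∃ G : SimpleGraph (Fin n), ∃ _ : DecidableRel G.Adj,
      G.IsRegularOfDegree α ∧ G.CliqueFree 3 := by
  classical
  obtain ⟨t, rfl⟩ := hαe
  obtain ⟨m, rfl⟩ := hn
  rw [← two_mul]
  rcases le_or_gt (3 * t) (m + 1) with hsmall | hlarge
  · have hreg := circulantGraph_isRegularOfDegree (s := middleInterval m t) neg_middleInterval
      (zero_notMem_middleInterval (by omega))
    rw [card_middleInterval (by omega)] at hreg
    refine exists_fin_isRegularOfDegree_cliqueFree (Fintype.card_fin _) hreg
      (circulantGraph_cliqueFree_three (by rw [← coe_neg, neg_middleInterval]) ?_)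
    simp only [mem_coe]
    exact fun a ha b hb => add_notMem_middleInterval hsmall ha hb
  · have : NeZero (2 * m + 1 - 4 * t) := ⟨by omega⟩
    let S := univ.map (Fin.castLEEmb (show t ≤ 2 * m + 1 - 4 * t by omega))
    have hS : #S = t := by simp [S]
    have hreg := pentagonBlowup_isRegularOfDegree (Fin (6 * t - (2 * m + 1))) (Fin t)
      (S := S) (by simp [hS]) (by simp [hS]; omega)
    rw [hS] at hreg
    exact exists_fin_isRegularOfDegree_cliqueFree (by simp [Fintype.card_sum]; omega) hreg
      (pentagonBlowup_cliqueFree_three _ _ _)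

theorem stmt11 (α n : ℕ) (hα : 2 ≤ α) (hαe : Even α) (hn : Odd n) (h5α : 5 * α ≤ 2 * n) :
    ∃ G : SimpleGraph (Fin n), ∃ _ : DecidableRel G.Adj,
      G.IsRegularOfDegree α ∧ G.CliqueFree 3 :=
  stmt11_general α n hαe hn h5α
end

section
/- For every integer α > 2 there is no α-regular finite simple graph on 2α + 1 vertices that is triangle-free; that is, every α-regular simple graph on 2α+1 vertices contains three pairwise adjacent vertices. -/
/-!
Pick an edge `uv`. In a triangle-free graph `N(u)` and `N(v)` are disjoint, so with degree `d`
they cover all vertices but one, `w`, and `N(w)` splits into its parts in `N(u)` and `N(v)`.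
Neither part is empty: otherwise `N(w)` would lie in `N(v)` minus `u`, which has `d - 1`
elements. A neighbour `x` of `w` in `N(u)` has no neighbours in `N(u)` or `N(w)`, so apart
from `w` all its `d` neighbours lie in `N(v) \ N(w)`; hence `N(v) ∩ N(w)` has at most one
element. Symmetrically so does `N(u) ∩ N(w)`, whence `d ≤ 2`.
-/

open SimpleGraph Finset

namespace SimpleGraph

variable {V : Type*} [Fintype V] {G : SimpleGraph V} [DecidableRel G.Adj] {d : ℕ} {u v w : V}

theorem IsRegularOfDegree.card_neighborFinset (hreg : G.IsRegularOfDegree d) (v : V) :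
    #(G.neighborFinset v) = d :=
  hreg.degree_eq v

variable [DecidableEq V]

theorem disjoint_neighborFinset_of_adj (hG : G.CliqueFree 3) (huv : G.Adj u v) :
    Disjoint (G.neighborFinset u) (G.neighborFinset v) := by
  rw [Finset.disjoint_left]
  intro z hzu hzv
  rw [mem_neighborFinset] at hzu hzv
  exact hG {u, v, z} (is3Clique_triple_iff.mpr ⟨huv, hzu, hzv⟩)

theorem exists_mem_neighborFinset_union_iff_ne (hG : G.CliqueFree 3)
    (hreg : G.IsRegularOfDegree d) (hcard : Fintype.card V = 2 * d + 1) (huv : G.Adj u v) :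
    ∃ w, ∀ z, z ∈ G.neighborFinset u ∪ G.neighborFinset v ↔ z ≠ w := by
  obtain ⟨w, hw⟩ : ∃ w, (G.neighborFinset u ∪ G.neighborFinset v)ᶜ = {w} := by
    apply card_eq_one.mp
    rw [card_compl, card_union_of_disjoint (disjoint_neighborFinset_of_adj hG huv),
      hreg.card_neighborFinset, hreg.card_neighborFinset, hcard]
    omega
  refine ⟨w, fun z ↦ ?_⟩
  rw [← not_iff_not, not_not, ← mem_compl, hw, mem_singleton]

theorem nonempty_neighborFinset_inter (hreg : G.IsRegularOfDegree d) (huv : G.Adj u v)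
    (hw : ∀ z, z ∈ G.neighborFinset u ∪ G.neighborFinset v ↔ z ≠ w) :
    (G.neighborFinset u ∩ G.neighborFinset w).Nonempty := by
  have hwu : ¬G.Adj u w := fun h ↦ (hw w).mp (mem_union_left _ (by simpa using h)) rfl
  rw [nonempty_iff_ne_empty]
  intro hempty
  have hsub : G.neighborFinset w ⊆ (G.neighborFinset v).erase u := by
    intro z hz
    have hzw : G.Adj w z := by simpa using hz
    rcases mem_union.mp ((hw z).mpr hzw.ne') with hzu | hzv
    · simpa [hempty] using mem_inter.mpr ⟨hzu, hz⟩
    · exact mem_erase.mpr ⟨by rintro rfl; exact hwu hzw.symm, hzv⟩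
  have hu : u ∈ G.neighborFinset v := by simpa using huv.symm
  have := card_le_card hsub
  rw [card_erase_of_mem hu] at this
  have := card_pos.mpr ⟨u, hu⟩
  simp only [hreg.card_neighborFinset] at *
  omega

theorem card_neighborFinset_inter_le_one (hG : G.CliqueFree 3) (hreg : G.IsRegularOfDegree d)
    (huv : G.Adj u v) (hw : ∀ z, z ∈ G.neighborFinset u ∪ G.neighborFinset v ↔ z ≠ w) :
    #(G.neighborFinset v ∩ G.neighborFinset w) ≤ 1 := by
  obtain ⟨x, hx⟩ := nonempty_neighborFinset_inter hreg huv hw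
  obtain ⟨hux, hwx⟩ : G.Adj u x ∧ G.Adj w x := by simpa using hx
  have hsub : G.neighborFinset x ⊆ insert w (G.neighborFinset v \ G.neighborFinset w) := by
    intro z hz
    by_cases hzw : z = w
    · exact hzw ▸ mem_insert_self _ _
    rcases mem_union.mp ((hw z).mpr hzw) with hzu | hzv
    · exact absurd hz (Finset.disjoint_left.mp (disjoint_neighborFinset_of_adj hG hux) hzu)
    · refine mem_insert_of_mem (mem_sdiff.mpr ⟨hzv, fun hzw' ↦ ?_⟩)
      exact Finset.disjoint_left.mp (disjoint_neighborFinset_of_adj hG hwx) hzw' hz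
  have := (card_le_card hsub).trans (card_insert_le _ _)
  have := card_inter_add_card_sdiff (G.neighborFinset v) (G.neighborFinset w)
  simp only [hreg.card_neighborFinset] at *
  omega

theorem not_cliqueFree_three_of_isRegularOfDegree (hd : 2 < d)
    (hcard : Fintype.card V = 2 * d + 1) (hreg : G.IsRegularOfDegree d) : ¬G.CliqueFree 3 := by
  intro hG
  obtain ⟨v⟩ : Nonempty V := by
    rw [← Fintype.card_pos_iff, hcard]
    omega
  obtain ⟨u, hu⟩ : (G.neighborFinset v).Nonempty := by
    rw [← card_pos, hreg.card_neighborFinset]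
    omega
  have huv : G.Adj u v := ((mem_neighborFinset _ _ _).mp hu).symm
  obtain ⟨w, hw⟩ := exists_mem_neighborFinset_union_iff_ne hG hreg hcard huv
  have hvw := card_neighborFinset_inter_le_one hG hreg huv hw
  have huw := card_neighborFinset_inter_le_one hG hreg huv.symm (by simpa [or_comm] using hw)
  have hsub : G.neighborFinset w ⊆
      (G.neighborFinset u ∩ G.neighborFinset w) ∪ (G.neighborFinset v ∩ G.neighborFinset w) := by
    rw [← union_inter_distrib_right]
    exact fun z hz ↦ mem_inter.mpr ⟨(hw z).mpr (G.ne_of_adj (by simpa using hz)).symm, hz⟩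
  have := (card_le_card hsub).trans (card_union_le _ _)
  rw [hreg.card_neighborFinset] at this
  omega

end SimpleGraph

theorem stmt12 {V : Type*} [Fintype V] (G : SimpleGraph V) [DecidableRel G.Adj]
    (α : ℕ) (hα : 2 < α) (hcard : Fintype.card V = 2 * α + 1)
    (hreg : G.IsRegularOfDegree α) :
    ∃ s : Finset V, G.IsNClique 3 s := by
  classical
  simpa [CliqueFree] using not_cliqueFree_three_of_isRegularOfDegree hα hcard hreg
end

section
/- Let G be an α-regular finite simple graph on n vertices that contains a triangle (three pairwise adjacent vertices), and suppose that every set of 4 vertices of G induces at most 4 edges. Then n ≥ 3α − 3. -/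
/-!
Let `abc` be a triangle. If two of its vertices, say `a` and `b`, had a common neighbour
`v ≠ c`, then `{a, b, c, v}` would induce at least five edges. So the neighbourhoods of `a`, `b`, `c`
pairwise meet in a single vertex of the triangle, and inclusion–exclusion gives
`3α - 3 ≤ |N(a) ∪ N(b) ∪ N(c)| ≤ n`.
-/

open SimpleGraph

/-- The number of edges of `G` with both endpoints in `S`. -/
noncomputable def inducedEdgeCount {V : Type*} (G : SimpleGraph V) (S : Finset V) : ℕ :=
  {e ∈ G.edgeSet | ∀ v ∈ e, v ∈ S}.ncard

open Finset

theorem Finset.card_add_card_add_card_le {α : Type*} [DecidableEq α] (A B C : Finset α) :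
    #A + #B + #C ≤ #(A ∪ B ∪ C) + #(A ∩ B) + #(A ∩ C) + #(B ∩ C) := by
  have hAB := card_union_add_card_inter A B
  have hABC := card_union_add_card_inter (A ∪ B) C
  have hinter : #((A ∪ B) ∩ C) ≤ #(A ∩ C) + #(B ∩ C) := by
    rw [union_inter_distrib_right]
    exact card_union_le _ _
  omega

namespace SimpleGraph

variable {V : Type*} (G : SimpleGraph V)

theorem card_le_inducedEdgeCount {S : Finset V} {T : Finset (Sym2 V)}
    (hT : ∀ e ∈ T, e ∈ G.edgeSet ∧ ∀ v ∈ e, v ∈ S) : #T ≤ inducedEdgeCount G S := by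
  rw [inducedEdgeCount, ← Set.ncard_coe_finset]
  classical
  exact Set.ncard_le_ncard (fun e he => hT e he)
    ((S.sym2 : Set (Sym2 V)).toFinite.subset fun e he => mem_sym2_iff.2 he.2)

variable {G} [DecidableEq V] {a b c v : V}

theorem five_le_inducedEdgeCount_of_adj (hab : G.Adj a b) (hac : G.Adj a c) (hbc : G.Adj b c)
    (hva : G.Adj v a) (hvb : G.Adj v b) (hvc : v ≠ c) :
    5 ≤ inducedEdgeCount G {a, b, c, v} := by
  have hT : #({s(a, b), s(a, c), s(b, c), s(v, a), s(v, b)} : Finset (Sym2 V)) = 5 := by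
    grind [card_insert_of_notMem, Sym2.eq_iff, hab.ne, hac.ne, hbc.ne, hva.ne, hvb.ne]
  refine hT ▸ card_le_inducedEdgeCount G ?_
  simp only [mem_insert, mem_singleton]
  rintro e (rfl | rfl | rfl | rfl | rfl) <;> simp [*]

theorem eq_of_adj_of_inducedEdgeCount_le_four
    (h4 : ∀ S : Finset V, #S = 4 → inducedEdgeCount G S ≤ 4)
    (hab : G.Adj a b) (hac : G.Adj a c) (hbc : G.Adj b c) (hva : G.Adj v a) (hvb : G.Adj v b) :
    v = c := by
  by_contra hvc
  have hcard : #{a, b, c, v} = 4 := by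
    grind [card_insert_of_notMem, hab.ne, hac.ne, hbc.ne, hva.ne, hvb.ne]
  have := h4 _ hcard
  have := five_le_inducedEdgeCount_of_adj hab hac hbc hva hvb hvc
  omega

theorem card_neighborFinset_inter_le_one_s13 [Fintype V] [DecidableRel G.Adj]
    (h4 : ∀ S : Finset V, #S = 4 → inducedEdgeCount G S ≤ 4)
    (hab : G.Adj a b) (hac : G.Adj a c) (hbc : G.Adj b c) :
    #(G.neighborFinset a ∩ G.neighborFinset b) ≤ 1 := by
  have hc {v : V} (hv : v ∈ G.neighborFinset a ∩ G.neighborFinset b) : v = c := by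
    simp only [mem_inter, mem_neighborFinset] at hv
    exact eq_of_adj_of_inducedEdgeCount_le_four h4 hab hac hbc hv.1.symm hv.2.symm
  exact card_le_one.2 fun u hu w hw => (hc hu).trans (hc hw).symm

end SimpleGraph

theorem stmt13 {V : Type*} [Fintype V] (G : SimpleGraph V) [DecidableRel G.Adj]
    (α : ℕ) (hreg : G.IsRegularOfDegree α)
    (htri : ∃ s : Finset V, G.IsNClique 3 s)
    (h4 : ∀ S : Finset V, S.card = 4 → inducedEdgeCount G S ≤ 4) :
    3 * α - 3 ≤ Fintype.card V := by
  classical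
  obtain ⟨s, hs⟩ := htri
  obtain ⟨a, b, c, hab, hac, hbc, rfl⟩ := is3Clique_iff.1 hs
  have hab' := card_neighborFinset_inter_le_one_s13 h4 hab hac hbc
  have hac' := card_neighborFinset_inter_le_one_s13 h4 hac hab hbc.symm
  have hbc' := card_neighborFinset_inter_le_one_s13 h4 hbc hab.symm hac.symm
  have hunion := card_add_card_add_card_le (G.neighborFinset a) (G.neighborFinset b)
    (G.neighborFinset c)
  have hle := card_le_univ (G.neighborFinset a ∪ G.neighborFinset b ∪ G.neighborFinset c)
  simp only [card_neighborFinset_eq_degree, hreg.degree_eq] at hunion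
  omega
end

section
/- Let G be a regular finite simple graph, let k ≥ 3 be an integer and let x be an integer with 0 ≤ x ≤ (k−1)(k−2)/2. Suppose that every set of k vertices of G induces at most k(k−1)/2 − x − 1 edges. Define y as follows: y = k(k−1)/2 − 1 if x = (k−1)(k−2)/2; y = ⌊2x/(k−1)⌋ + x + 1 if k is odd and x ≤ (k−1)(k−2)/2 − 1; y = 2⌊x/(k−1)⌋ + x + 1 if k is even, x ≤ (k−1)(k−2)/2 − 1 and 0 ≤ x mod (k−1) ≤ (k−4)/2; and y = 2⌊x/(k−1)⌋ + x + 2 if k is even, x ≤ (k−1)(k−2)/2 − 1 and (k−2)/2 ≤ x mod (k−1) ≤ k−2. Then every set of k+1 vertices of G induces at most (k+1)k/2 − y − 1 edges. -/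
/-!
Deleting one vertex of a `(k+1)`-set `S` leaves a `k`-set, and each edge inside `S` survives
exactly `k - 1` of the `k + 1` deletions. Summing the hypothesis over these deletions gives
`(k - 1) e(S) ≤ (k + 1) (k(k-1)/2 - x - 1)`. In each case of its definition `y` satisfies
`(k - 1) y < (k + 1) (x + 1)`, which is exactly what pushes this bound below
`(k - 1) ((k+1)k/2 - y)`, since `(k + 1) · k(k-1)/2 = (k - 1) · (k+1)k/2`.
-/

open SimpleGraph

open Finset

namespace SimpleGraph

variable {V : Type*} (G : SimpleGraph V)

open Classical in
theorem inducedEdgeCount_eq_card (S : Finset V) :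
    inducedEdgeCount G S = #{e ∈ S.sym2 | e ∈ G.edgeSet} := by
  rw [inducedEdgeCount, ← Set.ncard_coe_finset]
  congr 1
  ext e
  simp [Finset.mem_sym2_iff, and_comm]

variable [DecidableEq V]

theorem sum_inducedEdgeCount_erase (S : Finset V) :
    ∑ v ∈ S, inducedEdgeCount G (S.erase v) = inducedEdgeCount G S * (#S - 2) := by
  classical
  set E := {e ∈ S.sym2 | e ∈ G.edgeSet}
  have herase (v : V) : {e ∈ (S.erase v).sym2 | e ∈ G.edgeSet} = {e ∈ E | v ∉ e} := by
    ext e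
    simp only [E, mem_filter, Finset.mem_sym2_iff, mem_erase]
    grind
  have hsurvive : ∀ e ∈ E, #{v ∈ S | v ∉ e} = #S - 2 := by
    intro e he
    simp only [E, mem_filter, Finset.mem_sym2_iff] at he
    have hsub : e.toFinset ⊆ S := fun v hv => he.1 v (Sym2.mem_toFinset.1 hv)
    have hcard : #e.toFinset = 2 :=
      Sym2.card_toFinset_of_not_isDiag e (G.not_isDiag_of_mem_edgeSet he.2)
    rw [← hcard, ← card_sdiff_of_subset hsub]
    congr 1
    ext v
    simp
  calc ∑ v ∈ S, inducedEdgeCount G (S.erase v)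
      = ∑ v ∈ S, #{e ∈ E | v ∉ e} := by simp only [inducedEdgeCount_eq_card, herase]
    _ = ∑ e ∈ E, #{v ∈ S | v ∉ e} :=
        sum_card_bipartiteAbove_eq_sum_card_bipartiteBelow _
    _ = inducedEdgeCount G S * (#S - 2) := by
        rw [sum_congr rfl hsurvive, sum_const, smul_eq_mul, inducedEdgeCount_eq_card]

theorem inducedEdgeCount_mul_le {k m : ℕ}
    (hG : ∀ T : Finset V, #T = k → inducedEdgeCount G T ≤ m) {S : Finset V} (hS : #S = k + 1) :
    (k - 1) * inducedEdgeCount G S ≤ (k + 1) * m := by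
  calc (k - 1) * inducedEdgeCount G S
      = ∑ v ∈ S, inducedEdgeCount G (S.erase v) := by
        rw [sum_inducedEdgeCount_erase, hS, mul_comm]; rfl
    _ ≤ ∑ _v ∈ S, m := sum_le_sum fun v hv => hG _ (by rw [card_erase_of_mem hv, hS]; rfl)
    _ = (k + 1) * m := by rw [sum_const, hS, smul_eq_mul]

end SimpleGraph

theorem Nat.succ_mul_mul_pred_div_two (k : ℕ) :
    (k + 1) * (k * (k - 1) / 2) = (k - 1) * ((k + 1) * k / 2) := by
  have h := Nat.choose_mul_succ_eq k 2
  rw [Nat.choose_two_right, Nat.choose_two_right, Nat.add_sub_cancel,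
    show k + 1 - 2 = k - 1 by omega] at h
  rw [mul_comm, h, mul_comm]

theorem Nat.add_one_le_mul_pred_div_two {k x : ℕ} (hk : 2 ≤ k)
    (hx : x ≤ (k - 1) * (k - 2) / 2) : x + 1 ≤ k * (k - 1) / 2 := by
  have h := Nat.triangle_succ (k - 1)
  rw [Nat.sub_add_cancel (by omega : 1 ≤ k), show k - 1 - 1 = k - 2 by omega] at h
  omega

theorem Nat.add_lt_of_mul_le_of_mul_lt {a b c x y B M : ℕ} (hc : a * c ≤ b * (B - x - 1))
    (hy : a * y < b * (x + 1)) (hxB : x + 1 ≤ B) (hBM : b * B = a * M) : c + y < M := by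
  have hsplit : b * (B - x - 1) + b * (x + 1) = b * B := by
    rw [← mul_add]; congr 1; omega
  refine Nat.lt_of_mul_lt_mul_left (a := a) ?_
  linarith

/-- `x + 1` missing edges in every `k`-set force `deficitStep k x + 1` missing edges in every
`(k+1)`-set. -/
def deficitStep (k x : ℕ) : ℕ :=
  if x = (k - 1) * (k - 2) / 2 then k * (k - 1) / 2 - 1
  else if Odd k then 2 * x / (k - 1) + x + 1
  else if x % (k - 1) ≤ (k - 4) / 2 then 2 * (x / (k - 1)) + x + 1
  else 2 * (x / (k - 1)) + x + 2

theorem sub_one_mul_deficitStep_lt {k : ℕ} (hk : 3 ≤ k) (x : ℕ) :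
    (k - 1) * deficitStep k x < (k + 1) * (x + 1) := by
  obtain ⟨n, rfl⟩ : ∃ n, k = n + 2 := ⟨k - 2, by omega⟩
  simp only [deficitStep, Nat.add_sub_cancel, show n + 2 - 1 = n + 1 from rfl]
  split_ifs with hmax hodd
  · have h1 : 2 * ((n + 1) * n / 2) = (n + 1) * n :=
      Nat.two_mul_div_two_of_even (Nat.even_mul_pred_self (n + 1))
    have h2 : 2 * ((n + 2) * (n + 1) / 2) = (n + 2) * (n + 1) :=
      Nat.two_mul_div_two_of_even (Nat.even_mul_pred_self (n + 2))
    generalize (n + 1) * n / 2 = T at *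
    generalize (n + 2) * (n + 1) / 2 = U at *
    obtain rfl : U = T + n + 1 := by linarith
    subst hmax
    rw [Nat.add_sub_cancel]
    nlinarith
  · nlinarith [Nat.div_mul_le_self (2 * x) (n + 1)]
  · have := Nat.div_add_mod x (n + 1)
    generalize x / (n + 1) = q, x % (n + 1) = r at *
    nlinarith
  · have : n + 1 < 2 * (x % (n + 1)) + 2 := by
      rw [Nat.odd_add_one, not_not, Nat.odd_iff] at hodd
      omega
    have := Nat.div_add_mod x (n + 1)
    generalize x / (n + 1) = q, x % (n + 1) = r at *
    nlinarith

theorem stmt14_general {V : Type*} (G : SimpleGraph V)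
    (k x y : ℕ) (hk : 3 ≤ k)
    (hx : x ≤ (k - 1) * (k - 2) / 2)
    (hG : ∀ S : Finset V, S.card = k → inducedEdgeCount G S ≤ k * (k - 1) / 2 - x - 1)
    (hy : y = if x = (k - 1) * (k - 2) / 2 then k * (k - 1) / 2 - 1
          else if Odd k then 2 * x / (k - 1) + x + 1
          else if x % (k - 1) ≤ (k - 4) / 2 then 2 * (x / (k - 1)) + x + 1
          else 2 * (x / (k - 1)) + x + 2) :
    ∀ S : Finset V, S.card = k + 1 → inducedEdgeCount G S ≤ (k + 1) * k / 2 - y - 1 := by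
  classical
  intro S hS
  have hedges := G.inducedEdgeCount_mul_le hG hS
  have hdeficit : (k - 1) * y < (k + 1) * (x + 1) := hy ▸ sub_one_mul_deficitStep_lt hk x
  have := Nat.add_lt_of_mul_le_of_mul_lt hedges hdeficit
    (Nat.add_one_le_mul_pred_div_two (by omega) hx) (Nat.succ_mul_mul_pred_div_two k)
  omega

theorem stmt14 {V : Type*} [Fintype V] (G : SimpleGraph V) [DecidableRel G.Adj]
    (α k x y : ℕ) (hreg : G.IsRegularOfDegree α) (hk : 3 ≤ k)
    (hx : x ≤ (k - 1) * (k - 2) / 2)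
    (hG : ∀ S : Finset V, S.card = k → inducedEdgeCount G S ≤ k * (k - 1) / 2 - x - 1)
    (hy : y = if x = (k - 1) * (k - 2) / 2 then k * (k - 1) / 2 - 1
          else if Odd k then 2 * x / (k - 1) + x + 1
          else if x % (k - 1) ≤ (k - 4) / 2 then 2 * (x / (k - 1)) + x + 1
          else 2 * (x / (k - 1)) + x + 2) :
    ∀ S : Finset V, S.card = k + 1 → inducedEdgeCount G S ≤ (k + 1) * k / 2 - y - 1 :=
  stmt14_general G k x y hk hx hG hy
end

section
/- Let ρ ≥ 2 and α ≥ 2 be integers and let (P, 𝒢, ℬ) be a transversal design TD(ρ, α): P is a set of ρ·α points, 𝒢 is a partition of P into ρ groups each of size α, ℬ is a collection of distinct ρ-element subsets of P (blocks) such that every block meets every group in exactly one point and every pair of points from two different groups is contained in exactly one block. Let k be an integer with 1 ≤ k ≤ α, and write k = b·ρ + t with b, t nonnegative integers and t ≤ ρ − 1. Then for every k-element subset S of P, the number of blocks of ℬ that intersect S is at least k·α − k(k−1)/2 + ρ·b(b−1)/2 + b·t. -/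
/-!
Every point lies on `α` blocks, and two points of `S` lie on a common block exactly when they are
in different groups, and then on exactly one. The second Bonferroni inequality therefore bounds the
number of blocks meeting `S` below by `k α` minus the number of pairs of points of `S` in different
groups, which is `C(k, 2) - ∑_g C(n_g, 2)` with `n_g = |S ∩ g|`. Since `∑_g n_g = k = b ρ + t`,
the discrete convexity estimate `b n ≤ C(n, 2) + C(b + 1, 2)` summed over the `ρ` groups gives
`∑_g C(n_g, 2) ≥ ρ C(b, 2) + b t`.
-/

open Finset

theorem Finset.bonferroni_card_biUnion {ι α : Type*} [DecidableEq ι] [DecidableEq α]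
    (s : Finset ι) (f : ι → Finset α) :
    2 * ∑ i ∈ s, #(f i) ≤ 2 * #(s.biUnion f) + ∑ ij ∈ s.offDiag, #(f ij.1 ∩ f ij.2) := by
  set U := s.biUnion f
  have hfU : ∀ i ∈ s, {x ∈ U | x ∈ f i} = f i := fun i hi => by
    rw [filter_mem_eq_inter, inter_eq_right.2 (subset_biUnion_of_mem f hi)]
  have hsum : ∑ i ∈ s, #(f i) = ∑ x ∈ U, #{i ∈ s | x ∈ f i} := calc
    ∑ i ∈ s, #(f i) = ∑ i ∈ s, #(U.bipartiteAbove (fun i x => x ∈ f i) i) :=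
      sum_congr rfl fun i hi => by rw [bipartiteAbove, hfU i hi]
    _ = _ := sum_card_bipartiteAbove_eq_sum_card_bipartiteBelow _
  have hpairs :
      ∑ ij ∈ s.offDiag, #(f ij.1 ∩ f ij.2) = ∑ x ∈ U, #{i ∈ s | x ∈ f i}.offDiag := calc
    ∑ ij ∈ s.offDiag, #(f ij.1 ∩ f ij.2)
        = ∑ ij ∈ s.offDiag, #(U.bipartiteAbove (fun ij x => x ∈ f ij.1 ∧ x ∈ f ij.2) ij) :=
      sum_congr rfl fun ij hij => by
        obtain ⟨hi, hj, -⟩ := mem_offDiag.1 hij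
        rw [bipartiteAbove, filter_and, hfU _ hi, hfU _ hj]
    _ = ∑ x ∈ U, #(s.offDiag.bipartiteBelow (fun ij x => x ∈ f ij.1 ∧ x ∈ f ij.2) x) :=
      sum_card_bipartiteAbove_eq_sum_card_bipartiteBelow _
    _ = _ := sum_congr rfl fun x _ => by
        congr 1; ext ⟨i, j⟩; simp only [mem_bipartiteBelow, mem_offDiag, mem_filter]; tauto
  rw [hsum, hpairs, card_eq_sum_ones U, mul_sum, mul_sum, ← sum_add_distrib]
  refine sum_le_sum fun x _ => ?_
  rw [offDiag_card]
  rcases #{i ∈ s | x ∈ f i} with _ | _ | m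
  · simp
  · simp
  · zify [Nat.le_mul_self (m + 2)]
    nlinarith

lemma Nat.mul_self_eq_two_mul_choose_two_add (m : ℕ) : m * m = 2 * m.choose 2 + m := by
  rw [Nat.choose_two_right, Nat.mul_div_cancel' (Nat.even_mul_pred_self m).two_dvd]
  cases m <;> simp [Nat.mul_succ]

lemma Nat.mul_le_choose_two_add_choose_two (b n : ℕ) :
    b * n ≤ n.choose 2 + (b + 1).choose 2 := by
  -- equivalent to `(n - b) (n - b - 1) ≥ 0`
  qify
  rw [Nat.cast_choose_two, Nat.cast_choose_two]
  push_cast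
  rcases le_or_gt n b with h | h
  · have : (n : ℚ) ≤ b := by exact_mod_cast h
    nlinarith
  · have : (b : ℚ) + 1 ≤ n := by exact_mod_cast h
    nlinarith

theorem Finset.card_filter_product_eq_sum_sq {α β : Type*} [DecidableEq β]
    {s : Finset α} {t : Finset β} {f : α → β} (hf : ∀ a ∈ s, f a ∈ t) :
    #{x ∈ s ×ˢ s | f x.1 = f x.2} = ∑ c ∈ t, #{a ∈ s | f a = c} ^ 2 := by
  rw [card_eq_sum_card_fiberwise (f := fun x => f x.1) fun x hx =>
    hf _ (mem_filter.1 hx |>.1 |> mem_product.1).1]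
  refine sum_congr rfl fun c _ => ?_
  rw [sq, ← card_product]
  congr 1; ext ⟨a, a'⟩
  simp only [mem_filter, mem_product]
  constructor
  · rintro ⟨⟨⟨ha, ha'⟩, h⟩, rfl⟩; exact ⟨⟨ha, rfl⟩, ha', h.symm⟩
  · rintro ⟨⟨ha, rfl⟩, ha', h⟩; exact ⟨⟨⟨ha, ha'⟩, h.symm⟩, rfl⟩

theorem Finset.card_filter_product_ne_add_two_mul_sum_choose_two {α β : Type*} [DecidableEq β]
    {s : Finset α} {t : Finset β} {f : α → β} (hf : ∀ a ∈ s, f a ∈ t) :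
    #{x ∈ s ×ˢ s | f x.1 ≠ f x.2} + 2 * ∑ c ∈ t, (#{a ∈ s | f a = c}).choose 2 =
      2 * (#s).choose 2 := by
  have hsplit := card_filter_add_card_filter_not (s := s ×ˢ s) (fun x => f x.1 = f x.2)
  have hfib : ∑ c ∈ t, #{a ∈ s | f a = c} = #s := (card_eq_sum_card_fiberwise hf).symm
  rw [card_filter_product_eq_sum_sq hf, card_product] at hsplit
  simp only [sq, Nat.mul_self_eq_two_mul_choose_two_add, sum_add_distrib, ← mul_sum, hfib]
    at hsplit
  simp only [ne_eq]
  omega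

theorem Finset.card_mul_choose_two_add_mul_le_sum_choose_two {ι : Type*} (s : Finset ι)
    (n : ι → ℕ) {b t : ℕ} (hsum : ∑ i ∈ s, n i = b * #s + t) :
    #s * b.choose 2 + b * t ≤ ∑ i ∈ s, (n i).choose 2 := by
  have h := sum_le_sum fun i (_ : i ∈ s) => Nat.mul_le_choose_two_add_choose_two b (n i)
  rw [← mul_sum, hsum, sum_add_distrib, sum_const, smul_eq_mul, Nat.choose_succ_succ',
    Nat.choose_one_right] at h
  have hb := Nat.mul_self_eq_two_mul_choose_two_add b
  nlinarith

namespace TransversalDesign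

variable {P : Type*} [DecidableEq P] {Grp Blk : Finset (Finset P)} {p q : P}

theorem filter_inter_nonempty_eq_biUnion (Blk : Finset (Finset P)) (S : Finset P) :
    {bl ∈ Blk | (bl ∩ S).Nonempty} = S.biUnion fun p => {bl ∈ Blk | p ∈ bl} := by
  ext bl
  simp only [mem_filter, mem_biUnion, Finset.Nonempty, mem_inter]
  tauto

theorem card_filter_mem_and_mem_eq_one
    (hpair : ∀ p q : P, p ≠ q → (∀ g ∈ Grp, ¬(p ∈ g ∧ q ∈ g)) →
      ∃! bl, bl ∈ Blk ∧ p ∈ bl ∧ q ∈ bl)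
    (hpq : p ≠ q) (hsep : ∀ g ∈ Grp, ¬(p ∈ g ∧ q ∈ g)) :
    #{bl ∈ Blk | p ∈ bl ∧ q ∈ bl} = 1 :=
  card_eq_one_iff_existsUnique.2 (by simpa only [mem_filter] using hpair p q hpq hsep)

theorem filter_mem_and_mem_eq_empty (hBmeet : ∀ bl ∈ Blk, ∀ g ∈ Grp, #(bl ∩ g) = 1)
    {g : Finset P} (hg : g ∈ Grp) (hp : p ∈ g) (hq : q ∈ g) (hpq : p ≠ q) :
    {bl ∈ Blk | p ∈ bl ∧ q ∈ bl} = ∅ := by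
  refine filter_eq_empty_iff.2 fun bl hbl ⟨hpbl, hqbl⟩ => ?_
  have := hBmeet bl hbl g hg
  have : 1 < #(bl ∩ g) := one_lt_card.2 ⟨p, mem_inter.2 ⟨hpbl, hp⟩, q, mem_inter.2 ⟨hqbl, hq⟩, hpq⟩
  omega

/-- Double count the incidences between the blocks through `p` and the points of `g`: each such
block contains one point of `g`, and each point of `g` is joined to `p` by one block. -/
theorem card_filter_mem_eq_card_of_notMem (hBmeet : ∀ bl ∈ Blk, ∀ g ∈ Grp, #(bl ∩ g) = 1)
    (hGpart : ∀ p : P, ∃! g, g ∈ Grp ∧ p ∈ g)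
    (hpair : ∀ p q : P, p ≠ q → (∀ g ∈ Grp, ¬(p ∈ g ∧ q ∈ g)) →
      ∃! bl, bl ∈ Blk ∧ p ∈ bl ∧ q ∈ bl)
    {g : Finset P} (hg : g ∈ Grp) (hp : p ∉ g) :
    #{bl ∈ Blk | p ∈ bl} = #g := by
  have hjoin : ∀ q ∈ g, #{bl ∈ {bl ∈ Blk | p ∈ bl} | q ∈ bl} = 1 := fun q hq => by
    rw [filter_filter]
    refine card_filter_mem_and_mem_eq_one hpair (ne_of_mem_of_not_mem hq hp).symm ?_
    rintro g' hg' ⟨hpg', hqg'⟩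
    obtain rfl : g' = g := (hGpart q).unique ⟨hg', hqg'⟩ ⟨hg, hq⟩
    exact hp hpg'
  have := sum_card_inter hjoin
  rwa [sum_congr rfl fun bl hbl => by rw [inter_comm, hBmeet bl (mem_filter.1 hbl).1 g hg],
    ← card_eq_sum_ones, mul_one] at this

theorem card_filter_mem_eq {α : ℕ} (hGcard : 1 < #Grp) (hGsize : ∀ g ∈ Grp, #g = α)
    (hBmeet : ∀ bl ∈ Blk, ∀ g ∈ Grp, #(bl ∩ g) = 1)
    (hGpart : ∀ p : P, ∃! g, g ∈ Grp ∧ p ∈ g)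
    (hpair : ∀ p q : P, p ≠ q → (∀ g ∈ Grp, ¬(p ∈ g ∧ q ∈ g)) →
      ∃! bl, bl ∈ Blk ∧ p ∈ bl ∧ q ∈ bl)
    (p : P) : #{bl ∈ Blk | p ∈ bl} = α := by
  obtain ⟨gp, ⟨hgp, hpgp⟩, hgp_unique⟩ := hGpart p
  obtain ⟨g, hg, hne⟩ := exists_mem_ne hGcard gp
  have hpg : p ∉ g := fun hpg => hne (hgp_unique g ⟨hg, hpg⟩)
  rw [card_filter_mem_eq_card_of_notMem hBmeet hGpart hpair hg hpg, hGsize g hg]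

theorem sum_offDiag_card_inter_eq_card_filter_ne
    (hBmeet : ∀ bl ∈ Blk, ∀ g ∈ Grp, #(bl ∩ g) = 1)
    (hpair : ∀ p q : P, p ≠ q → (∀ g ∈ Grp, ¬(p ∈ g ∧ q ∈ g)) →
      ∃! bl, bl ∈ Blk ∧ p ∈ bl ∧ q ∈ bl)
    {gr : P → Finset P} (hgr : ∀ p, gr p ∈ Grp ∧ p ∈ gr p)
    (hgr_unique : ∀ p g, g ∈ Grp ∧ p ∈ g → g = gr p) (S : Finset P) :
    ∑ x ∈ S.offDiag, #({bl ∈ Blk | x.1 ∈ bl} ∩ {bl ∈ Blk | x.2 ∈ bl}) =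
      #{x ∈ S ×ˢ S | gr x.1 ≠ gr x.2} := by
  have hne : {x ∈ S ×ˢ S | gr x.1 ≠ gr x.2} = {x ∈ S.offDiag | gr x.1 ≠ gr x.2} := by
    ext ⟨p, q⟩
    simp only [mem_filter, mem_product, mem_offDiag]
    exact ⟨fun ⟨⟨hp, hq⟩, h⟩ => ⟨⟨hp, hq, fun hpq => h (hpq ▸ rfl)⟩, h⟩,
      fun ⟨⟨hp, hq, _⟩, h⟩ => ⟨⟨hp, hq⟩, h⟩⟩
  rw [hne, card_filter]
  refine sum_congr rfl fun ⟨p, q⟩ hpq => ?_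
  have hpq : p ≠ q := (mem_offDiag.1 hpq).2.2
  rw [← filter_and]
  split_ifs with h
  · refine card_filter_mem_and_mem_eq_one hpair hpq fun g hg ⟨hpg, hqg⟩ => h ?_
    rw [← hgr_unique p g ⟨hg, hpg⟩, ← hgr_unique q g ⟨hg, hqg⟩]
  · rw [filter_mem_and_mem_eq_empty hBmeet (hgr p).1 (hgr p).2 ((not_not.1 h) ▸ (hgr q).2) hpq,
      card_empty]

end TransversalDesign

open TransversalDesign

theorem stmt15_general {P : Type*} [DecidableEq P]
    (ρ α : ℕ) (hρ : 2 ≤ ρ)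
    (Grp : Finset (Finset P)) (Blk : Finset (Finset P))
    (hGcard : Grp.card = ρ)
    (hGsize : ∀ g ∈ Grp, g.card = α)
    (hGpart : ∀ p : P, ∃! g, g ∈ Grp ∧ p ∈ g)
    (hBmeet : ∀ bl ∈ Blk, ∀ g ∈ Grp, (bl ∩ g).card = 1)
    (hpair : ∀ p q : P, p ≠ q → (∀ g ∈ Grp, ¬(p ∈ g ∧ q ∈ g)) →
      ∃! bl, bl ∈ Blk ∧ p ∈ bl ∧ q ∈ bl)
    (k b t : ℕ) (hk : k ≤ α) (hkbt : k = b * ρ + t) :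
    ∀ S : Finset P, S.card = k →
      k * α - Nat.choose k 2 + ρ * Nat.choose b 2 + b * t ≤
        (Blk.filter (fun bl => (bl ∩ S).Nonempty)).card := by
  intro S hS
  have hdeg := card_filter_mem_eq (by omega) hGsize hBmeet hGpart hpair
  choose gr hgr hgr_unique using hGpart
  have hbonf := bonferroni_card_biUnion S fun p => {bl ∈ Blk | p ∈ bl}
  rw [← filter_inter_nonempty_eq_biUnion,
    sum_offDiag_card_inter_eq_card_filter_ne hBmeet hpair hgr hgr_unique,
    sum_congr rfl fun p _ => hdeg p, sum_const, smul_eq_mul, hS] at hbonf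
  have hpairs := card_filter_product_ne_add_two_mul_sum_choose_two (s := S) fun p _ => (hgr p).1
  have hconv := card_mul_choose_two_add_mul_le_sum_choose_two Grp
    (fun g => #{p ∈ S | gr p = g}) (b := b) (t := t)
    (by rw [← card_eq_sum_card_fiberwise fun p _ => (hgr p).1, hS, hkbt, hGcard])
  have hk2 : k.choose 2 ≤ k * α := by
    have := Nat.mul_self_eq_two_mul_choose_two_add k
    have := Nat.mul_le_mul_left k hk
    omega
  rw [hGcard] at hconv
  rw [hS] at hpairs
  omega

theorem stmt15 {P : Type*} [Fintype P] [DecidableEq P]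
    (ρ α : ℕ) (hρ : 2 ≤ ρ) (hα : 2 ≤ α)
    (Grp : Finset (Finset P)) (Blk : Finset (Finset P))
    (hP : Fintype.card P = ρ * α)
    (hGcard : Grp.card = ρ)
    (hGsize : ∀ g ∈ Grp, g.card = α)
    (hGpart : ∀ p : P, ∃! g, g ∈ Grp ∧ p ∈ g)
    (hBsize : ∀ bl ∈ Blk, bl.card = ρ)
    (hBmeet : ∀ bl ∈ Blk, ∀ g ∈ Grp, (bl ∩ g).card = 1)
    (hpair : ∀ p q : P, p ≠ q → (∀ g ∈ Grp, ¬(p ∈ g ∧ q ∈ g)) →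
      ∃! bl, bl ∈ Blk ∧ p ∈ bl ∧ q ∈ bl)
    (k b t : ℕ) (hk1 : 1 ≤ k) (hk : k ≤ α) (hkbt : k = b * ρ + t) (ht : t ≤ ρ - 1) :
    ∀ S : Finset P, S.card = k →
      k * α - Nat.choose k 2 + ρ * Nat.choose b 2 + b * t ≤
        (Blk.filter (fun bl => (bl ∩ S).Nonempty)).card :=
  stmt15_general ρ α hρ Grp Blk hGcard hGsize hGpart hBmeet hpair k b t hk hkbt
end

section
/- Let ρ ≥ 2, α ≥ 2, n ≥ 3 and θ be integers, and let N₁, …, N_n be α-element subsets of a θ-element set of symbols such that every symbol belongs to exactly ρ of the sets N_i and |N_i ∩ N_j| ≤ 1 for all i ≠ j. If n < ρ(ρ−1)α − ρ(ρ−2), then there exist three distinct indices i, j, l and three distinct symbols c₁, c₂, c₃ such that c₁ ∈ N_i ∩ N_l, c₂ ∈ N_i ∩ N_j and c₃ ∈ N_j ∩ N_l (a triangle in the incidence matrix); in particular |N_i ∪ N_j ∪ N_l| ≤ 3α − 3. -/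
/-!
Fix a symbol `c` and follow every path `c ∈ N k ∋ a ∈ N j` with `k` one of the `ρ` nodes holding
`c`, `a ≠ c` one of the `α - 1` other symbols of `N k`, and `j ≠ k` one of the `ρ - 1` other nodes
holding `a`. Since two nodes share at most one symbol, `j` never holds `c`; if moreover there is no
triangle, distinct paths end at distinct nodes `j`. Hence `ρ + ρ (α - 1) (ρ - 1) ≤ n`, which is
exactly the negation of `n < ρ (ρ - 1) α - ρ (ρ - 2)`. A triangle makes the three nodes overlap in
at least three symbols, whence the bound on their union.
-/

open Finset

theorem card_union_union_add_three_le {σ : Type*} [DecidableEq σ] {A B C : Finset σ}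
    {c₁ c₂ c₃ : σ} (h₁₃ : c₁ ≠ c₃) (h₁ : c₁ ∈ A ∩ C) (h₂ : c₂ ∈ A ∩ B) (h₃ : c₃ ∈ B ∩ C) :
    #(A ∪ B ∪ C) + 3 ≤ #A + #B + #C := by
  have hAB : 1 ≤ #(A ∩ B) := card_pos.mpr ⟨c₂, h₂⟩
  have hABC : 2 ≤ #((A ∪ B) ∩ C) := by
    rw [← card_pair h₁₃]
    refine card_le_card (insert_subset ?_ (singleton_subset_iff.mpr ?_))
    · exact mem_inter.mpr ⟨mem_union_left _ (mem_inter.mp h₁).1, (mem_inter.mp h₁).2⟩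
    · exact mem_inter.mpr ⟨mem_union_right _ (mem_inter.mp h₃).1, (mem_inter.mp h₃).2⟩
  have := card_union_add_card_inter A B
  have := card_union_add_card_inter (A ∪ B) C
  omega

theorem Nat.mul_mul_sub_mul_eq {ρ α : ℕ} (hρ : 2 ≤ ρ) (hα : 1 ≤ α) :
    ρ * (ρ - 1) * α - ρ * (ρ - 2) = ρ + ρ * (α - 1) * (ρ - 1) := by
  obtain ⟨r, rfl⟩ := Nat.exists_eq_add_of_le' hρ
  obtain ⟨a, rfl⟩ := Nat.exists_eq_add_of_le' hα
  rw [Nat.add_sub_cancel, Nat.add_sub_cancel, show r + 2 - 1 = r + 1 by omega]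
  apply Nat.sub_eq_of_eq_add
  ring

namespace FractionalRepetition

variable {ι σ : Type*} [DecidableEq σ]

def HasTriangle (N : ι → Finset σ) : Prop :=
  ∃ i j l : ι, i ≠ j ∧ j ≠ l ∧ i ≠ l ∧
    ∃ c₁ c₂ c₃ : σ, c₁ ≠ c₂ ∧ c₂ ≠ c₃ ∧ c₁ ≠ c₃ ∧
      c₁ ∈ N i ∩ N l ∧ c₂ ∈ N i ∩ N j ∧ c₃ ∈ N j ∩ N l

theorem eq_of_mem_inter {N : ι → Finset σ} (hN : Pairwise fun i j => #(N i ∩ N j) ≤ 1)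
    {i j : ι} (hij : i ≠ j) {a b : σ} (ha : a ∈ N i ∩ N j) (hb : b ∈ N i ∩ N j) : a = b :=
  card_le_one.mp (hN hij) a ha b hb

variable [Fintype ι]

def holders (N : ι → Finset σ) (c : σ) : Finset ι := univ.filter fun i => c ∈ N i

@[simp]
theorem mem_holders {N : ι → Finset σ} {c : σ} {i : ι} : i ∈ holders N c ↔ c ∈ N i := by
  simp [holders]

variable [DecidableEq ι]

/-- The paths `c ∈ N k ∋ a ∈ N j` with `a ≠ c` and `j ≠ k`, encoded as `⟨⟨k, a⟩, j⟩`. -/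
def fan (N : ι → Finset σ) (c : σ) : Finset (Σ _ : (Σ _ : ι, σ), ι) :=
  ((holders N c).sigma fun k => (N k).erase c).sigma fun p => (holders N p.2).erase p.1

variable {N : ι → Finset σ} {α ρ : ℕ}

theorem mem_fan {c a : σ} {k j : ι} :
    (⟨⟨k, a⟩, j⟩ : Σ _ : (Σ _ : ι, σ), ι) ∈ fan N c ↔
      (c ∈ N k ∧ a ≠ c ∧ a ∈ N k) ∧ j ≠ k ∧ a ∈ N j := by
  simp [fan]

theorem card_fan (hcard : ∀ i, #(N i) = α) (hrep : ∀ c, #(holders N c) = ρ) (c : σ) :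
    #(fan N c) = ρ * (α - 1) * (ρ - 1) := by
  have hfibre : ∀ p ∈ (holders N c).sigma fun k => (N k).erase c,
      #((holders N p.2).erase p.1) = ρ - 1 := by
    rintro ⟨k, a⟩ hp
    simp only [mem_sigma, mem_holders, mem_erase] at hp
    rw [card_erase_of_mem (mem_holders.mpr hp.2.2), hrep]
  have hrow : ∀ k ∈ holders N c, #((N k).erase c) = α - 1 := fun k hk => by
    rw [card_erase_of_mem (mem_holders.mp hk), hcard]
  rw [fan, card_sigma, sum_congr rfl hfibre, sum_const, card_sigma, sum_congr rfl hrow,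
    sum_const, hrep, smul_eq_mul, smul_eq_mul]

theorem fan_mapsTo_compl (hN : Pairwise fun i j => #(N i ∩ N j) ≤ 1) (c : σ) :
    Set.MapsTo (fun x => x.2) (fan N c : Set (Σ _ : (Σ _ : ι, σ), ι)) ↑(holders N c)ᶜ := by
  rintro ⟨⟨k, a⟩, j⟩ hx
  simp only [mem_coe, mem_fan] at hx
  obtain ⟨⟨hck, hac, hak⟩, hjk, haj⟩ := hx
  simp only [mem_coe, mem_compl, mem_holders]
  exact fun hcj => hac (eq_of_mem_inter hN hjk.symm (mem_inter.mpr ⟨hak, haj⟩)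
    (mem_inter.mpr ⟨hck, hcj⟩))

/-- Two paths ending at the same node `j` but starting at `k ≠ m` close up into a triangle
`k, j, m`, unless they pass through the same symbol `a`, which then lies in `N k ∩ N m` with `c`. -/
theorem fan_injOn (hN : Pairwise fun i j => #(N i ∩ N j) ≤ 1) (htri : ¬HasTriangle N) (c : σ) :
    Set.InjOn (fun x => x.2) (fan N c : Set (Σ _ : (Σ _ : ι, σ), ι)) := by
  rintro ⟨⟨k, a⟩, j⟩ hx ⟨⟨m, b⟩, j'⟩ hy (rfl : j = j')
  simp only [mem_coe, mem_fan] at hx hy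
  obtain ⟨⟨hck, hac, hak⟩, hjk, haj⟩ := hx
  obtain ⟨⟨hcm, hbc, hbm⟩, hjm, hbj⟩ := hy
  obtain rfl : k = m := by
    by_contra hkm
    obtain rfl | hab := eq_or_ne a b
    · exact hac (eq_of_mem_inter hN hkm (mem_inter.mpr ⟨hak, hbm⟩) (mem_inter.mpr ⟨hck, hcm⟩))
    · exact htri ⟨k, j, m, hjk.symm, hjm, hkm, c, a, b, hac.symm, hab, hbc.symm,
        mem_inter.mpr ⟨hck, hcm⟩, mem_inter.mpr ⟨hak, haj⟩, mem_inter.mpr ⟨hbj, hbm⟩⟩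
  obtain rfl : a = b := eq_of_mem_inter hN hjk.symm (mem_inter.mpr ⟨hak, haj⟩)
    (mem_inter.mpr ⟨hbm, hbj⟩)
  rfl

theorem add_mul_mul_le_card_of_not_hasTriangle (hN : Pairwise fun i j => #(N i ∩ N j) ≤ 1)
    (hcard : ∀ i, #(N i) = α) (hrep : ∀ c, #(holders N c) = ρ) (htri : ¬HasTriangle N)
    (c : σ) : ρ + ρ * (α - 1) * (ρ - 1) ≤ Fintype.card ι := by
  have hfan := card_le_card_of_injOn _ (fan_mapsTo_compl hN c) (fan_injOn hN htri c)
  rw [card_fan hcard hrep, card_compl, hrep] at hfan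
  have := hrep c ▸ card_le_univ (holders N c)
  omega

end FractionalRepetition

theorem stmt17 (n θ α ρ : ℕ) (hρ : 2 ≤ ρ) (hα : 2 ≤ α) (hn : 3 ≤ n)
    (N : Fin n → Finset (Fin θ))
    (hcard : ∀ i, (N i).card = α)
    (hrep : ∀ c : Fin θ, (Finset.univ.filter (fun i => c ∈ N i)).card = ρ)
    (hint : ∀ i j : Fin n, i ≠ j → (N i ∩ N j).card ≤ 1)
    (hsmall : n < ρ * (ρ - 1) * α - ρ * (ρ - 2)) :
    ∃ i j l : Fin n, i ≠ j ∧ j ≠ l ∧ i ≠ l ∧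
      (∃ c₁ c₂ c₃ : Fin θ, c₁ ≠ c₂ ∧ c₂ ≠ c₃ ∧ c₁ ≠ c₃ ∧
        c₁ ∈ N i ∩ N l ∧ c₂ ∈ N i ∩ N j ∧ c₃ ∈ N j ∩ N l) ∧
      (N i ∪ N j ∪ N l).card ≤ 3 * α - 3 := by
  have htri : FractionalRepetition.HasTriangle N := by
    by_contra htri
    obtain ⟨c, -⟩ : (N ⟨0, by omega⟩).Nonempty := card_pos.mp (by rw [hcard]; omega)
    have hcount :=
      FractionalRepetition.add_mul_mul_le_card_of_not_hasTriangle hint hcard hrep htri c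
    rw [Fintype.card_fin, ← Nat.mul_mul_sub_mul_eq hρ (by omega)] at hcount
    omega
  obtain ⟨i, j, l, hij, hjl, hil, c₁, c₂, c₃, h₁₂, h₂₃, h₁₃, h₁, h₂, h₃⟩ := htri
  refine ⟨i, j, l, hij, hjl, hil, ⟨c₁, c₂, c₃, h₁₂, h₂₃, h₁₃, h₁, h₂, h₃⟩, ?_⟩
  have := card_union_union_add_three_le h₁₃ h₁ h₂ h₃
  rw [hcard, hcard, hcard] at this
  omega
end

section
/- Let n, θ, α, M, k be positive integers with k ≤ n and α + 1 ≤ M ≤ θ + 1, and let N₁, …, N_n be α-element subsets of a θ-element set such that for every k-element set I of indices, |⋃_{i∈I} N_i| ≥ M. Then n · C(θ−α, M−1−α) ≤ (k−1) · C(θ, M−1), where C(a,b) denotes the binomial coefficient; equivalently, k ≥ ⌈n · C(M−1, α) / C(θ, α)⌉ + 1. -/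
/-!
Double count the pairs `(i, S)` with `S` an `(M - 1)`-subset of the symbols and `N i ⊆ S`.
Each `N i` lies in `C(θ - α, M - 1 - α)` such sets `S`. Conversely, no `S` contains `k` of
the `N i`, because their union would then have at most `M - 1` elements, so `S` contains at
most `k - 1` of them. This gives the first inequality. The second follows from the identity
`C(θ, M - 1) C(M - 1, α) = C(θ, α) C(θ - α, M - 1 - α)`.
-/

open Finset

section DoubleCounting

variable {ι β : Type*} [DecidableEq β]

lemma card_filter_subset_lt_of_forall_lt_card_biUnion (N : ι → Finset β) {k m : ℕ}
    (hrec : ∀ I : Finset ι, #I = k → m < #(I.biUnion N)) {S : Finset β} (hS : #S ≤ m)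
    (s : Finset ι) : #{i ∈ s | N i ⊆ S} < k := by
  by_contra! hk
  obtain ⟨I, hIs, hIk⟩ := exists_subset_card_eq hk
  have hIS : I.biUnion N ⊆ S := biUnion_subset.2 fun i hi => (mem_filter.1 (hIs hi)).2
  have := card_le_card hIS
  have := hrec I hIk
  omega

theorem card_mul_choose_le_of_forall_lt_card_biUnion [Fintype ι] [Fintype β]
    (N : ι → Finset β) {a k m : ℕ} (hcard : ∀ i, #(N i) = a) (ham : a ≤ m)
    (hrec : ∀ I : Finset ι, #I = k → m < #(I.biUnion N)) :
    Fintype.card ι * (Fintype.card β - a).choose (m - a)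
      ≤ (k - 1) * (Fintype.card β).choose m := by
  have hsupersets : ∀ i ∈ (univ : Finset ι),
      (Fintype.card β - a).choose (m - a)
        ≤ #((univ.powersetCard m).bipartiteAbove (fun i S => N i ⊆ S) i) := fun i _ => by
    rw [bipartiteAbove, card_filter_powersetCard_subset _ _ _ (subset_univ _) (hcard i ▸ ham),
      card_univ, hcard i]
  have hsubsets : ∀ S ∈ univ.powersetCard m,
      #((univ : Finset ι).bipartiteBelow (fun i S => N i ⊆ S) S) ≤ k - 1 := fun S hS => by
    have := card_filter_subset_lt_of_forall_lt_card_biUnion N hrec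
      (mem_powersetCard.1 hS).2.le univ
    rw [bipartiteBelow]
    omega
  have := card_mul_le_card_mul _ hsupersets hsubsets
  rwa [card_univ, card_powersetCard, card_univ, mul_comm _ (k - 1)] at this

end DoubleCounting

theorem Nat.mul_choose_le_of_mul_choose_sub_le {n c t a m : ℕ} (ham : a ≤ m) (hmt : m ≤ t)
    (h : n * (t - a).choose (m - a) ≤ c * t.choose m) :
    n * m.choose a ≤ c * t.choose a := by
  have hpos : 0 < (t - a).choose (m - a) := Nat.choose_pos (by omega)
  refine Nat.le_of_mul_le_mul_right ?_ hpos
  calc n * m.choose a * (t - a).choose (m - a)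
      = n * (t - a).choose (m - a) * m.choose a := by ring
    _ ≤ c * t.choose m * m.choose a := Nat.mul_le_mul_right _ h
    _ = c * t.choose a * (t - a).choose (m - a) := by
      rw [mul_assoc, Nat.choose_mul ham, mul_assoc]

theorem Int.ceil_natCast_div_le_of_le_mul {K : Type*} [Field K] [LinearOrder K]
    [IsStrictOrderedRing K] [FloorRing K] {a b c : ℕ} (h : a ≤ c * b) :
    ⌈((a : ℕ) : K) / ((b : ℕ) : K)⌉ ≤ c := by
  rcases Nat.eq_zero_or_pos b with rfl | hb
  · simp
  rw [Int.ceil_le, div_le_iff₀ (by exact_mod_cast hb)]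
  exact_mod_cast h

theorem stmt18_general (n θ α M k : ℕ)
    (hk0 : 0 < k) (hαM : α + 1 ≤ M) (hMθ : M ≤ θ + 1)
    (N : Fin n → Finset (Fin θ)) (hcard : ∀ i, (N i).card = α)
    (hrec : ∀ I : Finset (Fin n), I.card = k → M ≤ (I.biUnion N).card) :
    n * Nat.choose (θ - α) (M - 1 - α) ≤ (k - 1) * Nat.choose θ (M - 1) ∧
    ⌈((n * Nat.choose (M - 1) α : ℕ) : ℚ) / ((Nat.choose θ α : ℕ) : ℚ)⌉ + 1 ≤ (k : ℤ) := by
  have hrec' : ∀ I : Finset (Fin n), #I = k → M - 1 < #(I.biUnion N) := fun I hI => by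
    have := hrec I hI
    omega
  have hfirst := card_mul_choose_le_of_forall_lt_card_biUnion N hcard (by omega) hrec'
  simp only [Fintype.card_fin] at hfirst
  refine ⟨hfirst, ?_⟩
  have hceil : ⌈((n * Nat.choose (M - 1) α : ℕ) : ℚ) / ((Nat.choose θ α : ℕ) : ℚ)⌉ ≤ (k - 1 : ℕ) :=
    Int.ceil_natCast_div_le_of_le_mul
      (Nat.mul_choose_le_of_mul_choose_sub_le (by omega) (by omega) hfirst)
  omega

theorem stmt18 (n θ α M k : ℕ) (hn : 0 < n) (hθ : 0 < θ) (hα : 0 < α) (hM : 0 < M)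
    (hk0 : 0 < k) (hkn : k ≤ n) (hαM : α + 1 ≤ M) (hMθ : M ≤ θ + 1)
    (N : Fin n → Finset (Fin θ)) (hcard : ∀ i, (N i).card = α)
    (hrec : ∀ I : Finset (Fin n), I.card = k → M ≤ (I.biUnion N).card) :
    n * Nat.choose (θ - α) (M - 1 - α) ≤ (k - 1) * Nat.choose θ (M - 1) ∧
    ⌈((n * Nat.choose (M - 1) α : ℕ) : ℚ) / ((Nat.choose θ α : ℕ) : ℚ)⌉ + 1 ≤ (k : ℤ) :=
  stmt18_general n θ α M k hk0 hαM hMθ N hcard hrec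
end

section
/- Let n ≥ 4 be an even integer, set α = n − 2 and θ = n(n−2)/2. Then: (i) for every (n−2)-regular finite simple graph G on n vertices (equivalently, the complete graph K_n with a perfect matching removed), the minimum over all (n−2)-element vertex sets S of the number of edges of G incident to at least one vertex of S equals θ − 1; and (ii) ⌈n · C(θ−2, α) / C(θ, α)⌉ + 1 = n − 2, where C(a,b) is the binomial coefficient and ⌈·⌉ the ceiling of a rational number. Hence the fractional repetition code based on G stores a file of size M = θ − 1 with reconstruction degree k = n − 2 and attains the lower bound k ≥ ⌈n · C(M−1, α)/C(θ, α)⌉ + 1 on the reconstruction degree. -/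
/-!
A set of `n - 2` vertices is the complement of a pair `{a, b}`, and the only edge that avoids
it is `ab`, if present; taking `ab` to be an edge shows that the minimum is `θ - 1`. For the
bound, `C(θ - 2, α) / C(θ, α) = (θ - α)(θ - α - 1) / (θ(θ - 1))`, and with `x = n - 2` the
quotient `n · C(θ - 2, α) / C(θ, α)` simplifies to `x(x² - 2) / (x² + 2x - 2)`, which lies in
`(x - 2, x - 1]`.
-/

open SimpleGraph

open Finset

namespace SimpleGraph

variable {V : Type*} [Fintype V] {G : SimpleGraph V} [DecidableRel G.Adj]

theorem IsRegularOfDegree.two_mul_card_edgeFinset {d : ℕ} (h : G.IsRegularOfDegree d) :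
    2 * #G.edgeFinset = Fintype.card V * d := by
  rw [← sum_degrees_eq_twice_card_edges, sum_congr rfl fun v _ => h v, sum_const, smul_eq_mul,
    card_univ]

variable [DecidableEq V]

theorem incidentEdgeCount_add_card_filter_forall_notMem (S : Finset V) :
    incidentEdgeCount G S + #{e ∈ G.edgeFinset | ∀ v ∈ e, v ∉ S} = #G.edgeFinset := by
  have hinc : incidentEdgeCount G S = #{e ∈ G.edgeFinset | ∃ v ∈ S, v ∈ e} := by
    rw [incidentEdgeCount, ← Set.ncard_coe_finset]
    congr 1
    ext e
    simp
  rw [hinc, ← card_filter_add_card_filter_not (s := G.edgeFinset) (fun e => ∃ v ∈ S, v ∈ e)]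
  simp only [not_exists, not_and]
  congr 2
  exact filter_congr fun e _ => forall_congr' fun v => imp_not_comm

theorem filter_edgeFinset_forall_mem_pair (a b : V) :
    {e ∈ G.edgeFinset | ∀ v ∈ e, v ∈ ({a, b} : Finset V)} =
      if G.Adj a b then {s(a, b)} else ∅ := by
  ext e
  induction e with
  | h x y =>
    simp only [mem_filter, mem_edgeFinset, mem_edgeSet, Sym2.forall_mem_pair,
      mem_insert, mem_singleton]
    split_ifs with hab
    · simp only [mem_singleton, Sym2.eq_iff]
      constructor
      · rintro ⟨hxy, hx | hx, hy | hy⟩ <;> subst hx hy <;> simp_all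
      · rintro (⟨rfl, rfl⟩ | ⟨rfl, rfl⟩) <;> simp [hab, hab.symm]
    · simp only [notMem_empty, iff_false, not_and]
      rintro hxy (rfl | rfl) (rfl | rfl) <;> simp_all [G.adj_comm]

theorem incidentEdgeCount_compl_pair (a b : V) :
    incidentEdgeCount G {a, b}ᶜ = #G.edgeFinset - if G.Adj a b then 1 else 0 := by
  have h := incidentEdgeCount_add_card_filter_forall_notMem (G := G) {a, b}ᶜ
  simp only [mem_compl, not_not] at h
  rw [filter_edgeFinset_forall_mem_pair] at h
  split_ifs at h ⊢ <;> simp only [card_singleton, card_empty] at h <;> omega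

theorem fileSize_card_sub_two_of_adj {a b : V} (hab : G.Adj a b) :
    fileSize G (Fintype.card V - 2) = #G.edgeFinset - 1 := by
  refine IsLeast.csInf_eq ⟨⟨{a, b}ᶜ, ?_, ?_⟩, ?_⟩
  · rw [card_compl, card_pair hab.ne]
  · rw [incidentEdgeCount_compl_pair, if_pos hab]
  · rintro _ ⟨S, hS, rfl⟩
    obtain ⟨x, y, -, hxy⟩ : ∃ x y, x ≠ y ∧ Sᶜ = {x, y} := by
      rw [← card_eq_two, card_compl, hS]
      have : 2 ≤ Fintype.card V := card_pair hab.ne ▸ card_le_univ _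
      omega
    rw [← compl_compl S, hxy, incidentEdgeCount_compl_pair]
    split_ifs <;> omega

theorem IsRegularOfDegree.fileSize_card_sub_two [Nonempty V] {d : ℕ}
    (h : G.IsRegularOfDegree d) (hd : 0 < d) :
    fileSize G (Fintype.card V - 2) = Fintype.card V * d / 2 - 1 := by
  obtain ⟨a, b, hab⟩ : ∃ a b, G.Adj a b :=
    ⟨Classical.arbitrary V, (G.degree_pos_iff_exists_adj _).mp (h _ ▸ hd)⟩
  have hE := h.two_mul_card_edgeFinset
  rw [fileSize_card_sub_two_of_adj hab]
  omega

end SimpleGraph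

theorem Nat.choose_mul_add_one_mul_add_two (M a : ℕ) :
    M.choose a * ((M + 1) * (M + 2)) = (M + 2).choose a * ((M + 1 - a) * (M + 2 - a)) := by
  have h₁ := Nat.choose_mul_succ_eq M a
  have h₂ := Nat.choose_mul_succ_eq (M + 1) a
  calc M.choose a * ((M + 1) * (M + 2))
      = M.choose a * (M + 1) * (M + 2) := by ring
    _ = (M + 1).choose a * (M + 2) * (M + 1 - a) := by rw [h₁]; ring
    _ = (M + 2).choose a * ((M + 1 - a) * (M + 2 - a)) := by rw [h₂]; ring

theorem Nat.cast_choose_div_cast_choose_add_two {M a : ℕ} (h : a ≤ M) :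
    (M.choose a : ℚ) / (M + 2).choose a = (M + 1 - a) * (M + 2 - a) / ((M + 1) * (M + 2)) := by
  have hpos : (0 : ℚ) < (M + 2).choose a := by exact_mod_cast Nat.choose_pos (by omega)
  rw [div_eq_div_iff hpos.ne' (by positivity)]
  have := congrArg (Nat.cast : ℕ → ℚ) (Nat.choose_mul_add_one_mul_add_two M a)
  push_cast [Nat.cast_sub (show a ≤ M + 1 by omega), Nat.cast_sub (show a ≤ M + 2 by omega)] at this
  linear_combination this

theorem ceil_mul_sq_sub_two_div_eq_sub_one {x : ℤ} (hx : 2 ≤ x) :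
    ⌈(x * (x ^ 2 - 2) / (x ^ 2 + 2 * x - 2) : ℚ)⌉ = x - 1 := by
  have hx' : (2 : ℚ) ≤ x := by exact_mod_cast hx
  have hden : (0 : ℚ) < x ^ 2 + 2 * x - 2 := by nlinarith
  rw [Int.ceil_eq_iff, lt_div_iff₀ hden, div_le_iff₀ hden]
  push_cast
  constructor <;> nlinarith

theorem stmt19 (n : ℕ) (hn : 4 ≤ n) (hne : Even n) :
    (∀ (V : Type) [Fintype V] (G : SimpleGraph V) [DecidableRel G.Adj],
        Fintype.card V = n → G.IsRegularOfDegree (n - 2) →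
        fileSize G (n - 2) = n * (n - 2) / 2 - 1) ∧
    ⌈((n * Nat.choose (n * (n - 2) / 2 - 2) (n - 2) : ℕ) : ℚ) /
        ((Nat.choose (n * (n - 2) / 2) (n - 2) : ℕ) : ℚ)⌉ + 1 = (n : ℤ) - 2 := by
  constructor
  · intro V _ G _ hcard hreg
    classical
    subst hcard
    have : Nonempty V := Fintype.card_pos_iff.mp (by omega)
    exact hreg.fileSize_card_sub_two (by omega)
  · obtain ⟨k, rfl⟩ : ∃ k, n = 2 * k + 4 := by obtain ⟨r, hr⟩ := hne; exact ⟨r - 2, by omega⟩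
    have hα : 2 * k + 4 - 2 = 2 * k + 2 := by omega
    have hθ : (2 * k + 4) * (2 * k + 4 - 2) / 2 = (2 * k ^ 2 + 6 * k + 2) + 2 := by
      rw [hα, show (2 * k + 4) * (2 * k + 2) = 2 * (2 * k ^ 2 + 6 * k + 4) by ring]
      omega
    rw [hθ, hα, Nat.add_sub_cancel, Nat.cast_mul, mul_div_assoc,
      Nat.cast_choose_div_cast_choose_add_two (by nlinarith)]
    have hx := ceil_mul_sq_sub_two_div_eq_sub_one (x := 2 * k + 2) (by omega)
    convert congrArg (· + 1) hx using 3
    · rw [← mul_div_assoc, div_eq_div_iff (by positivity) (by push_cast; nlinarith)]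
      push_cast
      ring
    · push_cast
      ring
end
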